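/- arXiv:2402.06626 — 10 statements merged into one kernel-verified Lean document; each statement's English description precedes it below -/
import Mathlib

section
/- For every finite two-player game, the maximum over all pure commitments (a1, P) — with a1 ∈ A and payment function P : A × B → ℝ≥0 — of the leader's value equals max over pairs (a1, a2) ∈ A × B of u1(a1,a2) − (max_{b ∈ B} u2(a1,b) − u2(a1,a2)); moreover this maximum is attained by committing to an optimal a1 and to the payment function that pays max_{b ∈ B} u2(a1,b) − u2(a1,a2) at the outcome (a1,a2) and 0 elsewhere. -/
open Finset

noncomputable section

/-- A probability distribution on a finite type, given as a weight function. -/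
def IsDist {X : Type*} [Fintype X] (σ : X → ℝ) : Prop :=
  (∀ x, 0 ≤ σ x) ∧ ∑ x, σ x = 1

/-- The point mass at `x0`. -/
def delta {X : Type*} [DecidableEq X] (x0 : X) : X → ℝ :=
  fun x => if x = x0 then 1 else 0

/-- Follower's induced utility under commitment `(σ, P)` when playing `b`. -/
def folU {A B : Type*} [Fintype A] (u2 : A → B → ℝ) (σ : A → ℝ) (P : A → B → ℝ) (b : B) : ℝ :=
  ∑ a, σ a * (u2 a b + P a b)

/-- Leader's utility under commitment `(σ, P)` when the follower plays `b`. -/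
def leadU {A B : Type*} [Fintype A] (u1 : A → B → ℝ) (σ : A → ℝ) (P : A → B → ℝ) (b : B) : ℝ :=
  ∑ a, σ a * (u1 a b - P a b)

/-- The leader's value of the commitment `(σ, P)`: the follower plays an action maximizing
his induced utility, tiebreaking in favor of the leader. -/
def leaderValue {A B : Type*} [Fintype A] [Fintype B] (u1 u2 : A → B → ℝ)
    (σ : A → ℝ) (P : A → B → ℝ) : ℝ :=
  sSup {x | ∃ b : B, (∀ b' : B, folU u2 σ P b' ≤ folU u2 σ P b) ∧ x = leadU u1 σ P b}

section Aux

variable {A B : Type*} [Fintype A] [Fintype B] [DecidableEq A] [DecidableEq B]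
  [Nonempty A] [Nonempty B] (u1 u2 : A → B → ℝ)

lemma folU_delta (a1 : A) (P : A → B → ℝ) (b : B) :
    folU u2 (delta a1) P b = u2 a1 b + P a1 b := by
  simp [folU, delta, ite_mul]

lemma leadU_delta (a1 : A) (P : A → B → ℝ) (b : B) :
    leadU u1 (delta a1) P b = u1 a1 b - P a1 b := by
  simp [leadU, delta, ite_mul]

/-- The claimed optimal value. -/
def Mval : ℝ := univ.sup' univ_nonempty (fun p : A × B =>
  u1 p.1 p.2 - (univ.sup' univ_nonempty (fun b => u2 p.1 b) - u2 p.1 p.2))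

lemma mem_le (a1 : A) (P : A → B → ℝ) (hP : ∀ a b, 0 ≤ P a b) :
    ∀ x ∈ {x | ∃ b : B, (∀ b' : B, folU u2 (delta a1) P b' ≤ folU u2 (delta a1) P b) ∧
        x = leadU u1 (delta a1) P b}, x ≤ Mval u1 u2 := by
  rintro x ⟨b, hb, rfl⟩
  rw [leadU_delta]
  have h1 : univ.sup' univ_nonempty (fun b' => u2 a1 b') ≤ u2 a1 b + P a1 b := by
    apply sup'_le
    intro b' _
    have h2 := hb b'
    rw [folU_delta, folU_delta] at h2
    have h3 := hP a1 b'
    linarith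
  calc u1 a1 b - P a1 b
      ≤ u1 a1 b - (univ.sup' univ_nonempty (fun b' => u2 a1 b') - u2 a1 b) := by linarith
    _ ≤ Mval u1 u2 := le_sup' (fun p : A × B =>
        u1 p.1 p.2 - (univ.sup' univ_nonempty (fun b => u2 p.1 b) - u2 p.1 p.2))
        (mem_univ (a1, b))

lemma set_nonempty (a1 : A) (P : A → B → ℝ) :
    Set.Nonempty {x | ∃ b : B, (∀ b' : B, folU u2 (delta a1) P b' ≤ folU u2 (delta a1) P b) ∧
        x = leadU u1 (delta a1) P b} := by
  obtain ⟨b0, -, hb0⟩ := Finset.exists_max_image univ (folU u2 (delta a1) P) univ_nonempty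
  exact ⟨leadU u1 (delta a1) P b0, b0, fun b' => hb0 b' (mem_univ b'), rfl⟩

lemma upper (a1 : A) (P : A → B → ℝ) (hP : ∀ a b, 0 ≤ P a b) :
    leaderValue u1 u2 (delta a1) P ≤ Mval u1 u2 :=
  csSup_le (set_nonempty u1 u2 a1 P) (mem_le u1 u2 a1 P hP)

lemma part2 (a1 : A) (a2 : B)
    (hopt : ∀ p : A × B,
        u1 p.1 p.2 - (univ.sup' univ_nonempty (fun b => u2 p.1 b) - u2 p.1 p.2)
          ≤ u1 a1 a2 - (univ.sup' univ_nonempty (fun b => u2 a1 b) - u2 a1 a2)) :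
    leaderValue u1 u2 (delta a1)
        (fun a b => if a = a1 ∧ b = a2 then
            univ.sup' univ_nonempty (fun b' => u2 a1 b') - u2 a1 a2 else 0)
      = Mval u1 u2 := by
  set s : ℝ := univ.sup' univ_nonempty (fun b' => u2 a1 b') with hs
  have hsge : ∀ b : B, u2 a1 b ≤ s := fun b => le_sup' _ (mem_univ b)
  set P : A → B → ℝ := fun a b => if a = a1 ∧ b = a2 then s - u2 a1 a2 else 0 with hPdef
  have hP : ∀ a b, 0 ≤ P a b := by
    intro a b
    simp only [hPdef]
    split
    · linarith [hsge a2]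
    · exact le_rfl
  have htar : Mval u1 u2 = u1 a1 a2 - (s - u2 a1 a2) :=
    le_antisymm (sup'_le _ _ fun p _ => hopt p)
      (le_sup' (fun p : A × B =>
        u1 p.1 p.2 - (univ.sup' univ_nonempty (fun b => u2 p.1 b) - u2 p.1 p.2))
        (mem_univ (a1, a2)))
  have hbr : ∀ b' : B, folU u2 (delta a1) P b' ≤ folU u2 (delta a1) P a2 := by
    intro b'
    rw [folU_delta, folU_delta]
    have hPa2 : P a1 a2 = s - u2 a1 a2 := by simp [hPdef]
    rw [hPa2]
    have := hP a1 b'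
    have := hsge b'
    by_cases hb : b' = a2
    · subst hb; rw [hPa2]
    · have hP0 : P a1 b' = 0 := by simp [hPdef, hb]
      rw [hP0]
      linarith
  have hmem : u1 a1 a2 - (s - u2 a1 a2) ∈
      {x | ∃ b : B, (∀ b' : B, folU u2 (delta a1) P b' ≤ folU u2 (delta a1) P b) ∧
        x = leadU u1 (delta a1) P b} := by
    refine ⟨a2, hbr, ?_⟩
    rw [leadU_delta]
    simp [hPdef]
  refine le_antisymm (upper u1 u2 a1 P hP) ?_
  rw [htar]
  exact le_csSup ⟨Mval u1 u2, mem_le u1 u2 a1 P hP⟩ hmem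

end Aux

theorem stmt0 {A B : Type*} [Fintype A] [Fintype B] [DecidableEq A] [DecidableEq B]
    [Nonempty A] [Nonempty B] (u1 u2 : A → B → ℝ) :
    IsGreatest
      {x | ∃ (a1 : A) (P : A → B → ℝ), (∀ a b, 0 ≤ P a b) ∧
            x = leaderValue u1 u2 (delta a1) P}
      (univ.sup' univ_nonempty (fun p : A × B =>
        u1 p.1 p.2 - (univ.sup' univ_nonempty (fun b => u2 p.1 b) - u2 p.1 p.2)))
    ∧
    ∀ (a1 : A) (a2 : B),
      (∀ p : A × B,
          u1 p.1 p.2 - (univ.sup' univ_nonempty (fun b => u2 p.1 b) - u2 p.1 p.2)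
            ≤ u1 a1 a2 - (univ.sup' univ_nonempty (fun b => u2 a1 b) - u2 a1 a2)) →
      leaderValue u1 u2 (delta a1)
          (fun a b => if a = a1 ∧ b = a2 then
              univ.sup' univ_nonempty (fun b' => u2 a1 b') - u2 a1 a2 else 0)
        = univ.sup' univ_nonempty (fun p : A × B =>
            u1 p.1 p.2 - (univ.sup' univ_nonempty (fun b => u2 p.1 b) - u2 p.1 p.2)) := by
  constructor
  · constructor
    · obtain ⟨p, -, hp⟩ := Finset.exists_mem_eq_sup'
        (univ_nonempty : (univ : Finset (A × B)).Nonempty)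
        (fun p : A × B => u1 p.1 p.2 - (univ.sup' univ_nonempty (fun b => u2 p.1 b) - u2 p.1 p.2))
      have hopt : ∀ q : A × B,
          u1 q.1 q.2 - (univ.sup' univ_nonempty (fun b => u2 q.1 b) - u2 q.1 q.2)
            ≤ u1 p.1 p.2 - (univ.sup' univ_nonempty (fun b => u2 p.1 b) - u2 p.1 p.2) :=
        fun q => le_of_le_of_eq (le_sup' (fun p : A × B =>
          u1 p.1 p.2 - (univ.sup' univ_nonempty (fun b => u2 p.1 b) - u2 p.1 p.2))
          (mem_univ q)) hp
      refine ⟨p.1, fun a b => if a = p.1 ∧ b = p.2 then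
          univ.sup' univ_nonempty (fun b' => u2 p.1 b') - u2 p.1 p.2 else 0, ?_, ?_⟩
      · intro a b
        dsimp only
        split
        · have : u2 p.1 p.2 ≤ univ.sup' univ_nonempty (fun b => u2 p.1 b) :=
            le_sup' _ (mem_univ _)
          linarith
        · exact le_rfl
      · exact (part2 u1 u2 p.1 p.2 hopt).symm
    · rintro x ⟨a1, P, hP, rfl⟩
      exact upper u1 u2 a1 P hP
  · intro a1 a2 h
    exact part2 u1 u2 a1 a2 h
end
end

section
/- In the game G*: (i) for every payment function P : A × B → ℝ≥0, every Nash equilibrium (σ1, σ2) of the two-player game with utilities (u1 − P, u2 + P) gives Player 1 expected utility Σ_{a,b} σ1(a)σ2(b)(u1(a,b) − P(a,b)) at most 0; and (ii) for every σ ∈ Δ(A), the leader's value of the commitment (σ, 0) with the identically-zero payment function is at most 0. -/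
open Finset

noncomputable section

/-- Nash equilibrium of a finite two-player game: both strategies are distributions and
every action in each player's support is a best response against the other mixture. -/
def NashEq {A B : Type*} [Fintype A] [Fintype B] (u1 u2 : A → B → ℝ)
    (σ1 : A → ℝ) (σ2 : B → ℝ) : Prop :=
  IsDist σ1 ∧ IsDist σ2 ∧
  (∀ a : A, 0 < σ1 a → ∀ a' : A, ∑ b, σ2 b * u1 a' b ≤ ∑ b, σ2 b * u1 a b) ∧
  (∀ b : B, 0 < σ2 b → ∀ b' : B, ∑ a, σ1 a * u2 a b' ≤ ∑ a, σ1 a * u2 a b)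

/-- Leader's actions in the game G*. -/
inductive RA | Top | Bottom
  deriving DecidableEq

instance : Fintype RA :=
  ⟨{RA.Top, RA.Bottom}, fun x => by cases x <;> simp⟩

/-- Follower's actions in the game G*. -/
inductive CA | Left | Middle | Right
  deriving DecidableEq

instance : Fintype CA :=
  ⟨{CA.Left, CA.Middle, CA.Right}, fun x => by cases x <;> simp⟩

/-- Leader's utility in G*. -/
def u1s : RA → CA → ℝ
  | .Top, _ => -1
  | .Bottom, .Left => 2
  | .Bottom, .Middle => 0
  | .Bottom, .Right => 0

/-- Follower's utility in G*. -/
def u2s : RA → CA → ℝ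
  | .Top, .Left => 0
  | .Top, .Middle => -2
  | .Top, .Right => 0
  | .Bottom, .Left => 0
  | .Bottom, .Middle => 2
  | .Bottom, .Right => 1

/-
If the leader's equilibrium strategy puts weight on Top, Top is a best response for him and it
pays at most -1 whatever the follower does. Otherwise he plays Bottom, and the follower puts
weight on Left only if P(Bottom, Left) ≥ 2 + P(Bottom, Middle), which cancels the leader's gain
of 2 there. Without payments, Left is a best response to σ only if σ(Bottom) = 0, and every
other cell pays the leader at most 0.
-/

theorem IsDist.sum_mul_le {X : Type*} [Fintype X] {σ : X → ℝ} (hσ : IsDist σ) {f : X → ℝ}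
    {c : ℝ} (h : ∀ x, 0 < σ x → f x ≤ c) : ∑ x, σ x * f x ≤ c :=
  calc ∑ x, σ x * f x ≤ ∑ x, σ x * c := sum_le_sum fun x _ => by
        rcases (hσ.1 x).eq_or_lt with h0 | hpos
        · simp [← h0]
        · exact mul_le_mul_of_nonneg_left (h x hpos) hpos.le
    _ = c := by rw [← sum_mul, hσ.2, one_mul]

theorem NashEq.payoff_le {A B : Type*} [Fintype A] [Fintype B] {u1 u2 : A → B → ℝ}
    {σ1 : A → ℝ} {σ2 : B → ℝ} (h : NashEq u1 u2 σ1 σ2) {a : A} (ha : 0 < σ1 a) :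
    ∑ a', ∑ b, σ1 a' * σ2 b * u1 a' b ≤ ∑ b, σ2 b * u1 a b := by
  simp only [mul_assoc, ← mul_sum]
  exact h.1.sum_mul_le fun a' _ => h.2.2.1 a ha a'

theorem leaderValue_le {A B : Type*} [Fintype A] [Fintype B] [Nonempty B]
    {u1 u2 : A → B → ℝ} {σ : A → ℝ} {P : A → B → ℝ} {c : ℝ}
    (h : ∀ b, (∀ b', folU u2 σ P b' ≤ folU u2 σ P b) → leadU u1 σ P b ≤ c) :
    leaderValue u1 u2 σ P ≤ c := by
  obtain ⟨b, hb⟩ := Finite.exists_max (folU u2 σ P)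
  refine csSup_le ⟨_, b, hb, rfl⟩ ?_
  rintro x ⟨b, hb, rfl⟩
  exact h b hb

instance : Nonempty CA := ⟨.Left⟩

theorem RA.sum_univ (f : RA → ℝ) : ∑ a, f a = f .Top + f .Bottom := by
  rw [show (univ : Finset RA) = {.Top, .Bottom} from rfl, sum_pair (by decide)]

theorem IsDist.bottom_eq_one_of_top_eq_zero {σ : RA → ℝ} (hσ : IsDist σ) (h : σ .Top = 0) :
    σ .Bottom = 1 := by
  have := hσ.2
  rw [RA.sum_univ] at this
  linarith

theorem u1s_top_sub_nonpos {P : RA → CA → ℝ} (hP : ∀ a b, 0 ≤ P a b) (b : CA) :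
    u1s .Top b - P .Top b ≤ 0 := by
  simp only [u1s]
  linarith [hP .Top b]

theorem u1s_bottom_sub_nonpos {P : RA → CA → ℝ} (hP : ∀ a b, 0 ≤ P a b) {b : CA}
    (hb : u2s .Bottom .Middle + P .Bottom .Middle ≤ u2s .Bottom b + P .Bottom b) :
    u1s .Bottom b - P .Bottom b ≤ 0 := by
  have := hP .Bottom .Middle
  cases b <;> simp only [u1s, u2s] at hb ⊢ <;> linarith [hP .Bottom .Left, hP .Bottom .Right]

theorem u1s_nonpos_of_bestResponse {σ : RA → ℝ} {b : CA}
    (hb : ∀ b', folU u2s σ 0 b' ≤ folU u2s σ 0 b) {a : RA} (ha : 0 < σ a) : u1s a b ≤ 0 := by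
  cases a with
  | Top => norm_num [u1s]
  | Bottom =>
    cases b with
    | Left =>
      have := hb .Right
      simp only [folU, RA.sum_univ, u2s, Pi.zero_apply] at this
      linarith
    | _ => simp [u1s]

theorem stmt3 :
    (∀ P : RA → CA → ℝ, (∀ a b, 0 ≤ P a b) →
      ∀ (σ1 : RA → ℝ) (σ2 : CA → ℝ),
        NashEq (fun a b => u1s a b - P a b) (fun a b => u2s a b + P a b) σ1 σ2 →
        (∑ a, ∑ b, σ1 a * σ2 b * (u1s a b - P a b)) ≤ 0)
    ∧
    (∀ σ : RA → ℝ, IsDist σ → leaderValue u1s u2s σ (fun _ _ => 0) ≤ 0) := by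
  refine ⟨fun P hP σ1 σ2 hNE => ?_, fun σ hσ => ?_⟩
  · rcases (hNE.1.1 .Top).eq_or_lt with hTop | hTop
    · have hBottom := hNE.1.bottom_eq_one_of_top_eq_zero hTop.symm
      refine (hNE.payoff_le (a := .Bottom) (by rw [hBottom]; norm_num)).trans ?_
      refine hNE.2.1.sum_mul_le fun b hb => u1s_bottom_sub_nonpos hP ?_
      have := hNE.2.2.2 b hb .Middle
      simpa only [RA.sum_univ, ← hTop, hBottom, zero_mul, one_mul, zero_add] using this
    · exact (hNE.payoff_le hTop).trans
        (hNE.2.1.sum_mul_le fun b _ => u1s_top_sub_nonpos hP b)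
  · refine leaderValue_le fun b hb => ?_
    simp only [leadU, sub_zero]
    exact hσ.sum_mul_le fun a ha => u1s_nonpos_of_bestResponse hb ha
end
end

section
/- For every finite two-player game and every Nash equilibrium (σ1, σ2) of it, the leader's value of the commitment (σ1, 0) with the identically-zero payment function is at least the leader's equilibrium utility Σ_{a,b} σ1(a)σ2(b) u1(a,b). Consequently, the supremum of the leader's value over all commitments (σ, P) is at least the leader's expected utility in every Nash equilibrium of the game. -/
open Finset

noncomputable section

section Aux

variable {A B : Type*} [Fintype A] [Fintype B] [Nonempty A] [Nonempty B]

lemma brSet_nonempty (u1 u2 : A → B → ℝ) (σ : A → ℝ) (P : A → B → ℝ) :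
    {x | ∃ b : B, (∀ b' : B, folU u2 σ P b' ≤ folU u2 σ P b) ∧ x = leadU u1 σ P b}.Nonempty := by
  obtain ⟨b, _, hb⟩ := Finset.exists_max_image univ (folU u2 σ P) ⟨Classical.arbitrary B, mem_univ _⟩
  exact ⟨leadU u1 σ P b, b, fun b' => hb b' (mem_univ _), rfl⟩

lemma brSet_bddAbove (u1 u2 : A → B → ℝ) (σ : A → ℝ) (P : A → B → ℝ) :
    BddAbove {x | ∃ b : B, (∀ b' : B, folU u2 σ P b' ≤ folU u2 σ P b) ∧ x = leadU u1 σ P b} := by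
  apply Set.Finite.bddAbove
  apply (Set.finite_range (leadU u1 σ P)).subset
  rintro x ⟨b, _, rfl⟩
  exact ⟨b, rfl⟩

lemma leadU_le_M (u1 : A → B → ℝ) {σ : A → ℝ} {P : A → B → ℝ}
    (hσ : IsDist σ) (hP : ∀ a b, 0 ≤ P a b) (b : B) :
    leadU u1 σ P b ≤ univ.sup' ⟨(Classical.arbitrary A, Classical.arbitrary B), mem_univ _⟩
      (fun p : A × B => u1 p.1 p.2) := by
  set M := univ.sup' ⟨(Classical.arbitrary A, Classical.arbitrary B), mem_univ _⟩
      (fun p : A × B => u1 p.1 p.2) with hM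
  calc leadU u1 σ P b ≤ ∑ a, σ a * M := by
        apply Finset.sum_le_sum
        intro a _
        apply mul_le_mul_of_nonneg_left _ (hσ.1 a)
        have : u1 a b ≤ M := Finset.le_sup' (fun p : A × B => u1 p.1 p.2) (mem_univ (a, b))
        linarith [hP a b]
    _ = M := by rw [← Finset.sum_mul, hσ.2, one_mul]

lemma leaderValue_le_M (u1 u2 : A → B → ℝ) {σ : A → ℝ} {P : A → B → ℝ}
    (hσ : IsDist σ) (hP : ∀ a b, 0 ≤ P a b) :
    leaderValue u1 u2 σ P ≤ univ.sup' ⟨(Classical.arbitrary A, Classical.arbitrary B), mem_univ _⟩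
      (fun p : A × B => u1 p.1 p.2) := by
  apply csSup_le (brSet_nonempty u1 u2 σ P)
  rintro x ⟨b, _, rfl⟩
  exact leadU_le_M u1 hσ hP b

end Aux

theorem stmt4 {A B : Type*} [Fintype A] [Fintype B] [Nonempty A] [Nonempty B]
    (u1 u2 : A → B → ℝ) (σ1 : A → ℝ) (σ2 : B → ℝ) (h : NashEq u1 u2 σ1 σ2) :
    (∑ a, ∑ b, σ1 a * σ2 b * u1 a b) ≤ leaderValue u1 u2 σ1 (fun _ _ => 0)
    ∧ (∑ a, ∑ b, σ1 a * σ2 b * u1 a b)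
        ≤ sSup {x | ∃ (σ : A → ℝ) (P : A → B → ℝ), IsDist σ ∧ (∀ a b, 0 ≤ P a b) ∧
              x = leaderValue u1 u2 σ P} := by
  obtain ⟨h1, h2, _, h4⟩ := h
  set E := ∑ a, ∑ b, σ1 a * σ2 b * u1 a b with hE
  -- E = ∑ b, σ2 b * leadU u1 σ1 0 b
  have hEeq : E = ∑ b, σ2 b * leadU u1 σ1 (fun _ _ => 0) b := by
    rw [hE, Finset.sum_comm]
    apply Finset.sum_congr rfl
    intro b _
    rw [leadU, Finset.mul_sum]
    apply Finset.sum_congr rfl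
    intro a _
    ring
  have key : E ≤ leaderValue u1 u2 σ1 (fun _ _ => 0) := by
    -- find b in support with E ≤ leadU b
    classical
    set s : Finset B := univ.filter (fun b => 0 < σ2 b) with hs
    have hzero : ∀ b, b ∉ s → σ2 b = 0 := by
      intro b hb
      simp only [hs, Finset.mem_filter, mem_univ, true_and, not_lt] at hb
      exact le_antisymm hb (h2.1 b)
    have hrestr : ∀ f : B → ℝ, ∑ b, σ2 b * f b = ∑ b ∈ s, σ2 b * f b := by
      intro f
      rw [← Finset.sum_subset (Finset.subset_univ s)]
      intro b _ hb
      rw [hzero b hb, zero_mul]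
    have hs_ne : s.Nonempty := by
      by_contra hne
      rw [Finset.not_nonempty_iff_eq_empty] at hne
      have hone : (1:ℝ) = 0 := by
        rw [← h2.2]
        have := hrestr (fun _ => 1)
        simp only [mul_one] at this
        rw [this, hne, Finset.sum_empty]
      norm_num at hone
    have hsum : ∑ b ∈ s, σ2 b * E ≤ ∑ b ∈ s, σ2 b * leadU u1 σ1 (fun _ _ => 0) b := by
      rw [← hrestr, ← hrestr, ← hEeq, ← Finset.sum_mul, h2.2, one_mul]
    obtain ⟨b, hbs, hb⟩ := Finset.exists_le_of_sum_le hs_ne hsum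
    have hpos : 0 < σ2 b := (Finset.mem_filter.mp hbs).2
    have hle : E ≤ leadU u1 σ1 (fun _ _ => 0) b := le_of_mul_le_mul_left hb hpos
    have hbr : ∀ b', folU u2 σ1 (fun _ _ => 0) b' ≤ folU u2 σ1 (fun _ _ => 0) b := by
      intro b'
      have := h4 b hpos b'
      simpa [folU] using this
    exact hle.trans (le_csSup (brSet_bddAbove u1 u2 σ1 _) ⟨b, hbr, rfl⟩)
  refine ⟨key, key.trans ?_⟩
  apply le_csSup
  · -- bounded above by M
    refine ⟨univ.sup' ⟨(Classical.arbitrary A, Classical.arbitrary B), mem_univ _⟩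
      (fun p : A × B => u1 p.1 p.2), ?_⟩
    rintro x ⟨σ, P, hσ, hP, rfl⟩
    exact leaderValue_le_M u1 u2 hσ hP
  · exact ⟨σ1, fun _ _ => 0, h1, fun _ _ => le_refl 0, rfl⟩
end
end

section
/- There exist subsets V1' ⊆ V1 and V2' ⊆ V2 with |V1'| ≥ k, |V2'| ≥ k, and (v1, v2) ∈ E for every v1 ∈ V1' and v2 ∈ V2', if and only if there exists a payment commitment (P2, P3) and a Nash equilibrium (σ2, σ3) of the induced game between Players 2 and 3 in which Player 1's expected utility after payments is at least 1. -/
open Finset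

noncomputable section

/- Player 2's actions are `V1 ⊕ V2`: `Sum.inl v1 = (C, v1)` and `Sum.inr v2 = (E, v2)`.
Player 3's actions are `V2 ⊕ V1`: `Sum.inl v2 = (C, v2)` and `Sum.inr v1 = (E, v1)`. -/

/-- Player 1's utility in the bipartite-subgraph game. -/
def bu1 {V1 V2 : Type*} [DecidableEq V1] [DecidableEq V2]
    (E : Finset (V1 × V2)) : (V1 ⊕ V2) → (V2 ⊕ V1) → ℝ
  | Sum.inl v1, Sum.inl v2 => if (v1, v2) ∈ E then 1 else 0
  | _, _ => 0

/-- Player 2's utility in the bipartite-subgraph game. -/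
def bu2 {V1 V2 : Type*} [DecidableEq V1] [DecidableEq V2]
    (E : Finset (V1 × V2)) (k : ℕ) : (V1 ⊕ V2) → (V2 ⊕ V1) → ℝ
  | Sum.inl v1, Sum.inl v2 => if (v1, v2) ∈ E then 1 else 0
  | Sum.inr v2', Sum.inl v2 => if v2' = v2 then (k : ℝ) else 0
  | Sum.inl v1, Sum.inr v1' => if v1' = v1 then -(k : ℝ) - 1 else 0
  | Sum.inr _, Sum.inr _ => 0

/-- Player 3's utility in the bipartite-subgraph game. -/
def bu3 {V1 V2 : Type*} [DecidableEq V1] [DecidableEq V2]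
    (E : Finset (V1 × V2)) (k : ℕ) : (V1 ⊕ V2) → (V2 ⊕ V1) → ℝ
  | Sum.inl v1, Sum.inl v2 => if (v1, v2) ∈ E then 1 else 0
  | Sum.inr v2', Sum.inl v2 => if v2' = v2 then -(k : ℝ) - 1 else 0
  | Sum.inl v1, Sum.inr v1' => if v1' = v1 then (k : ℝ) else 0
  | Sum.inr _, Sum.inr _ => 0

theorem stmt8 {V1 V2 : Type*} [Fintype V1] [Fintype V2] [DecidableEq V1] [DecidableEq V2]
    [Nonempty V1] [Nonempty V2] (E : Finset (V1 × V2)) (k : ℕ) (hk : 1 ≤ k) :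
    (∃ (S1 : Finset V1) (S2 : Finset V2), k ≤ S1.card ∧ k ≤ S2.card ∧
        ∀ v1 ∈ S1, ∀ v2 ∈ S2, (v1, v2) ∈ E)
    ↔
    (∃ P2 P3 : (V1 ⊕ V2) → (V2 ⊕ V1) → ℝ,
      (∀ x y, 0 ≤ P2 x y) ∧ (∀ x y, 0 ≤ P3 x y) ∧
      ∃ (σ2 : (V1 ⊕ V2) → ℝ) (σ3 : (V2 ⊕ V1) → ℝ),
        NashEq (fun x y => bu2 E k x y + P2 x y) (fun x y => bu3 E k x y + P3 x y) σ2 σ3 ∧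
        1 ≤ ∑ x, ∑ y, σ2 x * σ3 y * (bu1 E x y - P2 x y - P3 x y)) := by
  have hkR : (1:ℝ) ≤ (k:ℝ) := by exact_mod_cast hk
  have hkpos : (0:ℝ) < (k:ℝ) := lt_of_lt_of_le one_pos hkR
  constructor
  · rintro ⟨S1, S2, hc1, hc2, hE⟩
    have hc1pos : (0:ℝ) < (S1.card:ℝ) := by exact_mod_cast lt_of_lt_of_le hk hc1
    have hc2pos : (0:ℝ) < (S2.card:ℝ) := by exact_mod_cast lt_of_lt_of_le hk hc2
    have hc1k : (k:ℝ) ≤ (S1.card:ℝ) := by exact_mod_cast hc1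
    have hc2k : (k:ℝ) ≤ (S2.card:ℝ) := by exact_mod_cast hc2
    set g2 : V1 → ℝ := fun v1 => if v1 ∈ S1 then ((S1.card:ℝ))⁻¹ else 0 with hg2def
    set g3 : V2 → ℝ := fun v2 => if v2 ∈ S2 then ((S2.card:ℝ))⁻¹ else 0 with hg3def
    have hg2nn : ∀ v1, 0 ≤ g2 v1 := by
      intro v1; rw [hg2def]; dsimp only; split <;> positivity
    have hg3nn : ∀ v2, 0 ≤ g3 v2 := by
      intro v2; rw [hg3def]; dsimp only; split <;> positivity
    have hsumg2 : ∑ v1, g2 v1 = 1 := by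
      rw [hg2def]; dsimp only
      rw [Finset.sum_ite_mem, Finset.univ_inter, Finset.sum_const, nsmul_eq_mul]
      exact mul_inv_cancel₀ (ne_of_gt hc1pos)
    have hsumg3 : ∑ v2, g3 v2 = 1 := by
      rw [hg3def]; dsimp only
      rw [Finset.sum_ite_mem, Finset.univ_inter, Finset.sum_const, nsmul_eq_mul]
      exact mul_inv_cancel₀ (ne_of_gt hc2pos)
    refine ⟨fun _ _ => 0, fun _ _ => 0, fun _ _ => le_refl 0, fun _ _ => le_refl 0,
      Sum.elim g2 (fun _ => 0), Sum.elim g3 (fun _ => 0), ⟨⟨?_, ?_⟩, ⟨?_, ?_⟩, ?_, ?_⟩, ?_⟩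
    · intro x; cases x with
      | inl v1 => exact hg2nn v1
      | inr v2 => exact le_refl 0
    · rw [Fintype.sum_sum_type]
      simp only [Sum.elim_inl, Sum.elim_inr, Finset.sum_const_zero, add_zero]
      exact hsumg2
    · intro y; cases y with
      | inl v2 => exact hg3nn v2
      | inr v1 => exact le_refl 0
    · rw [Fintype.sum_sum_type]
      simp only [Sum.elim_inl, Sum.elim_inr, Finset.sum_const_zero, add_zero]
      exact hsumg3
    · -- player 2 best response
      intro a ha a'
      simp only
      have pay : ∀ c : V1 ⊕ V2, ∑ b, Sum.elim g3 (fun _ => 0) b * (bu2 E k c b + 0)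
          = ∑ v2, g3 v2 * bu2 E k c (Sum.inl v2) := by
        intro c
        rw [Fintype.sum_sum_type]
        simp
      rw [pay, pay]
      -- a must be inl v1 with v1 ∈ S1
      obtain ⟨v1, rfl, hv1⟩ : ∃ v1, a = Sum.inl v1 ∧ v1 ∈ S1 := by
        cases a with
        | inl v1 =>
          refine ⟨v1, rfl, ?_⟩
          by_contra h
          simp only [Sum.elim_inl, hg2def, h, if_false] at ha
          exact lt_irrefl _ ha
        | inr v2 => simp at ha
      have hRHS : ∑ v2, g3 v2 * bu2 E k (Sum.inl v1) (Sum.inl v2) = 1 := by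
        rw [← hsumg3]
        apply Finset.sum_congr rfl
        intro v2 _
        by_cases h : v2 ∈ S2
        · simp [bu2, hE v1 hv1 v2 h]
        · simp [hg3def, h]
      rw [hRHS]
      cases a' with
      | inl v1' =>
        calc ∑ v2, g3 v2 * bu2 E k (Sum.inl v1') (Sum.inl v2)
            ≤ ∑ v2, g3 v2 := by
              apply Finset.sum_le_sum
              intro v2 _
              have h1 : bu2 E k (Sum.inl v1') (Sum.inl v2) ≤ 1 := by
                simp only [bu2]; split <;> norm_num
              have h0 : (0:ℝ) ≤ bu2 E k (Sum.inl v1') (Sum.inl v2) := by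
                simp only [bu2]; split <;> norm_num
              nlinarith [hg3nn v2]
          _ = 1 := hsumg3
      | inr v2' =>
        have : ∑ v2, g3 v2 * bu2 E k (Sum.inr v2') (Sum.inl v2) = g3 v2' * k := by
          rw [Finset.sum_eq_single v2']
          · simp [bu2]
          · intro v2 _ hne
            simp [bu2, Ne.symm hne]
          · simp
        rw [this]
        by_cases h : v2' ∈ S2
        · rw [hg3def]; dsimp only; rw [if_pos h, ← div_eq_inv_mul]
          exact div_le_one_of_le₀ hc2k hc2pos.le
        · simp [hg3def, h]
    · -- player 3 best response
      intro b hb b'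
      simp only
      have pay : ∀ c : V2 ⊕ V1, ∑ a, Sum.elim g2 (fun _ => 0) a * (bu3 E k a c + 0)
          = ∑ v1, g2 v1 * bu3 E k (Sum.inl v1) c := by
        intro c
        rw [Fintype.sum_sum_type]
        simp
      rw [pay, pay]
      obtain ⟨v2, rfl, hv2⟩ : ∃ v2, b = Sum.inl v2 ∧ v2 ∈ S2 := by
        cases b with
        | inl v2 =>
          refine ⟨v2, rfl, ?_⟩
          by_contra h
          simp only [Sum.elim_inl, hg3def, h, if_false] at hb
          exact lt_irrefl _ hb
        | inr v1 => simp at hb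
      have hRHS : ∑ v1, g2 v1 * bu3 E k (Sum.inl v1) (Sum.inl v2) = 1 := by
        rw [← hsumg2]
        apply Finset.sum_congr rfl
        intro v1 _
        by_cases h : v1 ∈ S1
        · simp [bu3, hE v1 h v2 hv2]
        · simp [hg2def, h]
      rw [hRHS]
      cases b' with
      | inl v2' =>
        calc ∑ v1, g2 v1 * bu3 E k (Sum.inl v1) (Sum.inl v2')
            ≤ ∑ v1, g2 v1 := by
              apply Finset.sum_le_sum
              intro v1 _
              have h1 : bu3 E k (Sum.inl v1) (Sum.inl v2') ≤ 1 := by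
                simp only [bu3]; split <;> norm_num
              have h0 : (0:ℝ) ≤ bu3 E k (Sum.inl v1) (Sum.inl v2') := by
                simp only [bu3]; split <;> norm_num
              nlinarith [hg2nn v1]
          _ = 1 := hsumg2
      | inr v1' =>
        have : ∑ v1, g2 v1 * bu3 E k (Sum.inl v1) (Sum.inr v1') = g2 v1' * k := by
          rw [Finset.sum_eq_single v1']
          · simp [bu3]
          · intro v1 _ hne
            simp [bu3, Ne.symm hne]
          · simp
        rw [this]
        by_cases h : v1' ∈ S1
        · rw [hg2def]; dsimp only; rw [if_pos h, ← div_eq_inv_mul]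
          exact div_le_one_of_le₀ hc1k hc1pos.le
        · simp [hg2def, h]
    · -- player 1 value
      rw [Fintype.sum_sum_type]
      have hzero : ∀ v2 : V2, ∑ y : V2 ⊕ V1,
          (Sum.elim g2 (fun _ => (0:ℝ)) : V1 ⊕ V2 → ℝ) (Sum.inr v2) *
          (Sum.elim g3 (fun _ => (0:ℝ)) : V2 ⊕ V1 → ℝ) y *
          (bu1 E (Sum.inr v2) y - 0 - 0) = 0 := by
        intro v2; apply Finset.sum_eq_zero; intro y _; simp
      have hinl : ∀ v1 : V1, ∑ y : V2 ⊕ V1,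
          (Sum.elim g2 (fun _ => (0:ℝ)) : V1 ⊕ V2 → ℝ) (Sum.inl v1) *
          (Sum.elim g3 (fun _ => (0:ℝ)) : V2 ⊕ V1 → ℝ) y *
          (bu1 E (Sum.inl v1) y - 0 - 0) = g2 v1 := by
        intro v1
        rw [Fintype.sum_sum_type]
        simp only [Sum.elim_inl, Sum.elim_inr, mul_zero, zero_mul, sub_zero,
          Finset.sum_const_zero, add_zero]
        by_cases h : v1 ∈ S1
        · have : ∀ v2 : V2, g2 v1 * g3 v2 * bu1 E (Sum.inl v1) (Sum.inl v2) = g2 v1 * g3 v2 := by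
            intro v2
            by_cases h2 : v2 ∈ S2
            · simp [bu1, hE v1 h v2 h2]
            · simp [hg3def, h2]
          rw [Finset.sum_congr rfl (fun v2 _ => this v2), ← Finset.mul_sum, hsumg3, mul_one]
        · have hz : g2 v1 = 0 := by simp [hg2def, h]
          simp [hz]
      rw [Finset.sum_congr rfl (fun v1 _ => hinl v1), Finset.sum_congr rfl (fun v2 _ => hzero v2)]
      simp [hsumg2]
  · rintro ⟨P2, P3, hP2, hP3, σ2, σ3, ⟨⟨h2nn, h2sum⟩, ⟨h3nn, h3sum⟩, hbr2, hbr3⟩, h1⟩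
    have hbu1le : ∀ x y, bu1 E x y ≤ 1 := by
      intro x y
      cases x <;> cases y <;> simp only [bu1] <;> try norm_num
      split <;> norm_num
    -- every support pair has bu1 = 1 and zero payments
    have hF : ∀ x y, 0 ≤ σ2 x * σ3 y * (1 - (bu1 E x y - P2 x y - P3 x y)) := by
      intro x y
      apply mul_nonneg (mul_nonneg (h2nn x) (h3nn y))
      have := hbu1le x y; have := hP2 x y; have := hP3 x y; linarith
    have hprod : ∑ x, ∑ y, σ2 x * σ3 y = 1 := by
      simp_rw [← Finset.mul_sum, h3sum, mul_one]
      exact h2sum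
    have hFsum : ∑ x, ∑ y, σ2 x * σ3 y * (1 - (bu1 E x y - P2 x y - P3 x y)) ≤ 0 := by
      simp_rw [mul_one_sub, Finset.sum_sub_distrib]
      rw [hprod]
      linarith
    have hz : ∀ x y, σ2 x * σ3 y * (1 - (bu1 E x y - P2 x y - P3 x y)) = 0 := by
      have hsum0 : ∑ p : (V1 ⊕ V2) × (V2 ⊕ V1),
          σ2 p.1 * σ3 p.2 * (1 - (bu1 E p.1 p.2 - P2 p.1 p.2 - P3 p.1 p.2)) = 0 := by
        apply le_antisymm
        · rw [Fintype.sum_prod_type]; exact hFsum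
        · exact Finset.sum_nonneg fun p _ => hF p.1 p.2
      intro x y
      exact (Finset.sum_eq_zero_iff_of_nonneg (fun p _ => hF p.1 p.2)).mp hsum0 (x, y)
        (Finset.mem_univ _)
    have key : ∀ x y, 0 < σ2 x → 0 < σ3 y →
        bu1 E x y = 1 ∧ P2 x y = 0 ∧ P3 x y = 0 := by
      intro x y hx hy
      have hpos : 0 < σ2 x * σ3 y := mul_pos hx hy
      have h0 : 1 - (bu1 E x y - P2 x y - P3 x y) = 0 :=
        (mul_eq_zero.mp (hz x y)).resolve_left (ne_of_gt hpos)
      have := hbu1le x y; have := hP2 x y; have := hP3 x y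
      refine ⟨by linarith, by linarith, by linarith⟩
    have hex2 : ∃ x, 0 < σ2 x := by
      by_contra h
      push_neg at h
      have : ∀ x, σ2 x = 0 := fun x => le_antisymm (h x) (h2nn x)
      simp [this] at h2sum
    have hex3 : ∃ y, 0 < σ3 y := by
      by_contra h
      push_neg at h
      have : ∀ y, σ3 y = 0 := fun y => le_antisymm (h y) (h3nn y)
      simp [this] at h3sum
    have hσ2inr : ∀ v2, σ2 (Sum.inr v2) = 0 := by
      intro v2
      by_contra h
      have hp : 0 < σ2 (Sum.inr v2) := lt_of_le_of_ne (h2nn _) (Ne.symm h)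
      obtain ⟨y, hy⟩ := hex3
      have := (key _ y hp hy).1
      cases y <;> simp [bu1] at this
    have hσ3inr : ∀ v1, σ3 (Sum.inr v1) = 0 := by
      intro v1
      by_contra h
      have hp : 0 < σ3 (Sum.inr v1) := lt_of_le_of_ne (h3nn _) (Ne.symm h)
      obtain ⟨x, hx⟩ := hex2
      have := (key x _ hx hp).1
      cases x <;> simp [bu1] at this
    obtain ⟨y0, hy0⟩ := hex3
    obtain ⟨v20, rfl⟩ : ∃ v2, y0 = Sum.inl v2 := by
      cases y0 with
      | inl v2 => exact ⟨v2, rfl⟩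
      | inr v1 => rw [hσ3inr v1] at hy0; exact absurd hy0 (lt_irrefl 0)
    obtain ⟨x0, hx0⟩ := hex2
    obtain ⟨v10, rfl⟩ : ∃ v1, x0 = Sum.inl v1 := by
      cases x0 with
      | inl v1 => exact ⟨v1, rfl⟩
      | inr v2 => rw [hσ2inr v2] at hx0; exact absurd hx0 (lt_irrefl 0)
    -- equilibrium payoffs equal 1
    have hRHS3 : ∑ a, σ2 a * (bu3 E k a (Sum.inl v20) + P3 a (Sum.inl v20)) = 1 := by
      rw [← h2sum]
      apply Finset.sum_congr rfl
      intro a _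
      rcases eq_or_lt_of_le (h2nn a) with h | h
      · simp [← h]
      · obtain ⟨e1, _, e3⟩ := key a (Sum.inl v20) h hy0
        cases a with
        | inl v1 =>
          have hedge : (v1, v20) ∈ E := by
            by_contra hne
            simp [bu1, hne] at e1
          simp [bu3, hedge, e3]
        | inr v2 => simp [bu1] at e1
    have hRHS2 : ∑ b, σ3 b * (bu2 E k (Sum.inl v10) b + P2 (Sum.inl v10) b) = 1 := by
      rw [← h3sum]
      apply Finset.sum_congr rfl
      intro b _
      rcases eq_or_lt_of_le (h3nn b) with h | h
      · simp [← h]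
      · obtain ⟨e1, e2, _⟩ := key (Sum.inl v10) b hx0 h
        cases b with
        | inl v2 =>
          have hedge : (v10, v2) ∈ E := by
            by_contra hne
            simp [bu1, hne] at e1
          simp [bu2, hedge, e2]
        | inr v1 => simp [bu1] at e1
    have hdev3 : ∀ v1, σ2 (Sum.inl v1) * k ≤ 1 := by
      intro v1
      have h : ∑ a, σ2 a * (bu3 E k a (Sum.inr v1) + P3 a (Sum.inr v1))
          ≤ ∑ a, σ2 a * (bu3 E k a (Sum.inl v20) + P3 a (Sum.inl v20)) :=
        hbr3 (Sum.inl v20) hy0 (Sum.inr v1)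
      rw [hRHS3] at h
      refine le_trans (le_trans ?_ (Finset.single_le_sum
        (f := fun a => σ2 a * (bu3 E k a (Sum.inr v1) + P3 a (Sum.inr v1))) ?_
        (Finset.mem_univ (Sum.inl v1)))) h
      · have hb : bu3 E k (Sum.inl v1) (Sum.inr v1) = k := by simp [bu3]
        show σ2 (Sum.inl v1) * (k:ℝ)
            ≤ σ2 (Sum.inl v1) * (bu3 E k (Sum.inl v1) (Sum.inr v1) + P3 (Sum.inl v1) (Sum.inr v1))
        rw [hb]
        have := hP3 (Sum.inl v1) (Sum.inr v1)
        nlinarith [h2nn (Sum.inl v1)]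
      · intro a _
        apply mul_nonneg (h2nn a)
        have hnn : (0:ℝ) ≤ bu3 E k a (Sum.inr v1) := by
          cases a <;> simp only [bu3] <;> [skip; norm_num]
          split <;> positivity
        have := hP3 a (Sum.inr v1)
        linarith
    have hdev2 : ∀ v2, σ3 (Sum.inl v2) * k ≤ 1 := by
      intro v2
      have h : ∑ b, σ3 b * (bu2 E k (Sum.inr v2) b + P2 (Sum.inr v2) b)
          ≤ ∑ b, σ3 b * (bu2 E k (Sum.inl v10) b + P2 (Sum.inl v10) b) :=
        hbr2 (Sum.inl v10) hx0 (Sum.inr v2)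
      rw [hRHS2] at h
      refine le_trans (le_trans ?_ (Finset.single_le_sum
        (f := fun b => σ3 b * (bu2 E k (Sum.inr v2) b + P2 (Sum.inr v2) b)) ?_
        (Finset.mem_univ (Sum.inl v2)))) h
      · have hb : bu2 E k (Sum.inr v2) (Sum.inl v2) = k := by simp [bu2]
        show σ3 (Sum.inl v2) * (k:ℝ)
            ≤ σ3 (Sum.inl v2) * (bu2 E k (Sum.inr v2) (Sum.inl v2) + P2 (Sum.inr v2) (Sum.inl v2))
        rw [hb]
        have := hP2 (Sum.inr v2) (Sum.inl v2)
        nlinarith [h3nn (Sum.inl v2)]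
      · intro b _
        apply mul_nonneg (h3nn b)
        have hnn : (0:ℝ) ≤ bu2 E k (Sum.inr v2) b := by
          cases b <;> simp only [bu2] <;> [skip; norm_num]
          split <;> positivity
        have := hP2 (Sum.inr v2) b
        linarith
    -- define the sets
    refine ⟨Finset.univ.filter (fun v1 => 0 < σ2 (Sum.inl v1)),
            Finset.univ.filter (fun v2 => 0 < σ3 (Sum.inl v2)), ?_, ?_, ?_⟩
    · have hsum1 : ∑ v1, σ2 (Sum.inl v1) = 1 := by
        rw [Fintype.sum_sum_type] at h2sum
        simpa [hσ2inr] using h2sum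
      have hfil : ∑ v1 ∈ Finset.univ.filter (fun v1 => 0 < σ2 (Sum.inl v1)), σ2 (Sum.inl v1) = 1 := by
        rw [← hsum1]
        apply Finset.sum_subset (Finset.filter_subset _ _)
        intro v1 _ hnot
        simp only [Finset.mem_filter, Finset.mem_univ, true_and, not_lt] at hnot
        exact le_antisymm hnot (h2nn _)
      have hle : (1:ℝ) ≤ (Finset.univ.filter (fun v1 => 0 < σ2 (Sum.inl v1))).card * (k:ℝ)⁻¹ := by
        rw [← hfil]
        calc ∑ v1 ∈ Finset.univ.filter (fun v1 => 0 < σ2 (Sum.inl v1)), σ2 (Sum.inl v1)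
            ≤ ∑ _v1 ∈ Finset.univ.filter (fun v1 => 0 < σ2 (Sum.inl v1)), (k:ℝ)⁻¹ := by
              apply Finset.sum_le_sum
              intro v1 _
              rw [← one_div]
              exact (le_div_iff₀ hkpos).mpr (hdev3 v1)
          _ = (Finset.univ.filter (fun v1 => 0 < σ2 (Sum.inl v1))).card * (k:ℝ)⁻¹ := by
              rw [Finset.sum_const, nsmul_eq_mul]
      have hcard : (k:ℝ) ≤ (Finset.univ.filter (fun v1 => 0 < σ2 (Sum.inl v1))).card := by
        rw [← div_eq_mul_inv, one_le_div hkpos] at hle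
        exact hle
      exact_mod_cast hcard
    · have hsum1 : ∑ v2, σ3 (Sum.inl v2) = 1 := by
        rw [Fintype.sum_sum_type] at h3sum
        simpa [hσ3inr] using h3sum
      have hfil : ∑ v2 ∈ Finset.univ.filter (fun v2 => 0 < σ3 (Sum.inl v2)), σ3 (Sum.inl v2) = 1 := by
        rw [← hsum1]
        apply Finset.sum_subset (Finset.filter_subset _ _)
        intro v2 _ hnot
        simp only [Finset.mem_filter, Finset.mem_univ, true_and, not_lt] at hnot
        exact le_antisymm hnot (h3nn _)
      have hle : (1:ℝ) ≤ (Finset.univ.filter (fun v2 => 0 < σ3 (Sum.inl v2))).card * (k:ℝ)⁻¹ := by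
        rw [← hfil]
        calc ∑ v2 ∈ Finset.univ.filter (fun v2 => 0 < σ3 (Sum.inl v2)), σ3 (Sum.inl v2)
            ≤ ∑ _v2 ∈ Finset.univ.filter (fun v2 => 0 < σ3 (Sum.inl v2)), (k:ℝ)⁻¹ := by
              apply Finset.sum_le_sum
              intro v2 _
              rw [← one_div]
              exact (le_div_iff₀ hkpos).mpr (hdev2 v2)
          _ = (Finset.univ.filter (fun v2 => 0 < σ3 (Sum.inl v2))).card * (k:ℝ)⁻¹ := by
              rw [Finset.sum_const, nsmul_eq_mul]
      have hcard : (k:ℝ) ≤ (Finset.univ.filter (fun v2 => 0 < σ3 (Sum.inl v2))).card := by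
        rw [← div_eq_mul_inv, one_le_div hkpos] at hle
        exact hle
      exact_mod_cast hcard
    · intro v1 hv1 v2 hv2
      simp only [Finset.mem_filter, Finset.mem_univ, true_and] at hv1 hv2
      have := (key (Sum.inl v1) (Sum.inl v2) hv1 hv2).1
      by_contra hne
      simp [bu1, hne] at this
end
end

section
/- If V1' ⊆ V1 and V2' ⊆ V2 satisfy |V1'| = |V2'| = k and (v1, v2) ∈ E for every v1 ∈ V1' and v2 ∈ V2', then in the induced game with zero payments (P2 = P3 = 0), the profile in which Player 2 mixes uniformly over {(C,v) : v ∈ V1'} and Player 3 mixes uniformly over {(C,v) : v ∈ V2'} is a Nash equilibrium, and at this profile all three players receive expected utility 1. -/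
open Finset

noncomputable section

theorem stmt9 {V1 V2 : Type*} [Fintype V1] [Fintype V2] [DecidableEq V1] [DecidableEq V2]
    (E : Finset (V1 × V2)) (k : ℕ) (hk : 1 ≤ k)
    (S1 : Finset V1) (S2 : Finset V2) (h1 : S1.card = k) (h2 : S2.card = k)
    (hcomp : ∀ v1 ∈ S1, ∀ v2 ∈ S2, (v1, v2) ∈ E)
    (σ2 : (V1 ⊕ V2) → ℝ) (σ3 : (V2 ⊕ V1) → ℝ)
    (hσ2 : σ2 = Sum.elim (fun v1 => if v1 ∈ S1 then 1 / (k : ℝ) else 0) (fun _ => 0))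
    (hσ3 : σ3 = Sum.elim (fun v2 => if v2 ∈ S2 then 1 / (k : ℝ) else 0) (fun _ => 0)) :
    NashEq (bu2 E k) (bu3 E k) σ2 σ3
    ∧ (∑ x, ∑ y, σ2 x * σ3 y * bu1 E x y) = 1
    ∧ (∑ x, ∑ y, σ2 x * σ3 y * bu2 E k x y) = 1
    ∧ (∑ x, ∑ y, σ2 x * σ3 y * bu3 E k x y) = 1 := by
  subst hσ2 hσ3
  have hkpos : (0:ℝ) < (k:ℝ) := by exact_mod_cast Nat.pos_of_ne_zero (by omega)
  have hkne : (k:ℝ) ≠ 0 := ne_of_gt hkpos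
  -- row payoffs against σ3
  have rowC : ∀ v1 : V1,
      (∑ y, Sum.elim (fun v2 => if v2 ∈ S2 then 1 / (k:ℝ) else 0) (fun _ => 0) y
        * bu2 E k (Sum.inl v1) y)
      = ∑ v2 ∈ S2, (1/(k:ℝ)) * (if (v1, v2) ∈ E then 1 else 0) := by
    intro v1
    rw [Fintype.sum_sum_type]
    simp only [Sum.elim_inl, Sum.elim_inr, bu2, zero_mul, Finset.sum_const_zero, add_zero,
      ite_mul, Finset.sum_ite_mem, Finset.univ_inter]
  have rowC1 : ∀ v1 ∈ S1,
      (∑ v2 ∈ S2, (1/(k:ℝ)) * (if (v1, v2) ∈ E then 1 else 0)) = 1 := by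
    intro v1 hv1
    rw [Finset.sum_congr rfl (fun v2 hv2 => by
      rw [if_pos (hcomp v1 hv1 v2 hv2), mul_one])]
    rw [Finset.sum_const, h2, nsmul_eq_mul]
    field_simp
  have rowCle : ∀ v1 : V1,
      (∑ v2 ∈ S2, (1/(k:ℝ)) * (if (v1, v2) ∈ E then 1 else 0)) ≤ 1 := by
    intro v1
    calc (∑ v2 ∈ S2, (1/(k:ℝ)) * (if (v1, v2) ∈ E then 1 else 0))
        ≤ ∑ v2 ∈ S2, (1/(k:ℝ)) := by
          refine Finset.sum_le_sum (fun v2 _ => ?_)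
          split <;> simp [(one_div_pos.mpr hkpos).le]
      _ = 1 := by rw [Finset.sum_const, h2, nsmul_eq_mul]; field_simp
  have rowE : ∀ v2' : V2,
      (∑ y, Sum.elim (fun v2 => if v2 ∈ S2 then 1 / (k:ℝ) else 0) (fun _ => 0) y
        * bu2 E k (Sum.inr v2') y) = if v2' ∈ S2 then 1 else 0 := by
    intro v2'
    rw [Fintype.sum_sum_type]
    simp only [Sum.elim_inl, Sum.elim_inr, bu2, mul_ite, mul_zero, zero_mul,
      Finset.sum_const_zero, add_zero, Finset.sum_ite_eq, Finset.mem_univ, if_true]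
    split
    · field_simp
    · simp
  -- column payoffs against σ2
  have colC : ∀ v2 : V2,
      (∑ x, Sum.elim (fun v1 => if v1 ∈ S1 then 1 / (k:ℝ) else 0) (fun _ => 0) x
        * bu3 E k x (Sum.inl v2))
      = ∑ v1 ∈ S1, (1/(k:ℝ)) * (if (v1, v2) ∈ E then 1 else 0) := by
    intro v2
    rw [Fintype.sum_sum_type]
    simp only [Sum.elim_inl, Sum.elim_inr, bu3, zero_mul, Finset.sum_const_zero, add_zero,
      ite_mul, Finset.sum_ite_mem, Finset.univ_inter]
  have colC1 : ∀ v2 ∈ S2,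
      (∑ v1 ∈ S1, (1/(k:ℝ)) * (if (v1, v2) ∈ E then 1 else 0)) = 1 := by
    intro v2 hv2
    rw [Finset.sum_congr rfl (fun v1 hv1 => by
      rw [if_pos (hcomp v1 hv1 v2 hv2), mul_one])]
    rw [Finset.sum_const, h1, nsmul_eq_mul]
    field_simp
  have colCle : ∀ v2 : V2,
      (∑ v1 ∈ S1, (1/(k:ℝ)) * (if (v1, v2) ∈ E then 1 else 0)) ≤ 1 := by
    intro v2
    calc (∑ v1 ∈ S1, (1/(k:ℝ)) * (if (v1, v2) ∈ E then 1 else 0))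
        ≤ ∑ v1 ∈ S1, (1/(k:ℝ)) := by
          refine Finset.sum_le_sum (fun v1 _ => ?_)
          split <;> simp [le_of_lt hkpos, (one_div_pos.mpr hkpos).le]
      _ = 1 := by rw [Finset.sum_const, h1, nsmul_eq_mul]; field_simp
  have colE : ∀ v1' : V1,
      (∑ x, Sum.elim (fun v1 => if v1 ∈ S1 then 1 / (k:ℝ) else 0) (fun _ => 0) x
        * bu3 E k x (Sum.inr v1')) = if v1' ∈ S1 then 1 else 0 := by
    intro v1'
    rw [Fintype.sum_sum_type]
    simp only [Sum.elim_inl, Sum.elim_inr, bu3, mul_ite, mul_zero, zero_mul,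
      Finset.sum_const_zero, add_zero, Finset.sum_ite_eq, Finset.mem_univ, if_true]
    split
    · field_simp
    · simp
  -- double-sum lemma
  have hdouble : ∀ u : (V1 ⊕ V2) → (V2 ⊕ V1) → ℝ,
      (∀ v1 v2, u (Sum.inl v1) (Sum.inl v2) = if (v1, v2) ∈ E then 1 else 0) →
      (∑ x, ∑ y, Sum.elim (fun v1 => if v1 ∈ S1 then 1 / (k:ℝ) else 0) (fun _ => 0) x
        * (Sum.elim (fun v2 => if v2 ∈ S2 then 1 / (k:ℝ) else 0) (fun _ => 0) y)
        * u x y) = 1 := by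
    intro u hu
    rw [Fintype.sum_sum_type]
    have h0 : ∑ v2 : V2, (∑ y, (0:ℝ) * (Sum.elim (fun v2 => if v2 ∈ S2 then 1 / (k:ℝ) else 0) (fun _ => 0) y) * u (Sum.inr v2) y) = 0 := by
      simp
    simp only [Sum.elim_inl, Sum.elim_inr] at h0 ⊢
    rw [h0, add_zero]
    have : ∀ v1 : V1, (∑ y, (if v1 ∈ S1 then 1 / (k:ℝ) else 0)
        * (Sum.elim (fun v2 => if v2 ∈ S2 then 1 / (k:ℝ) else 0) (fun _ => 0) y) * u (Sum.inl v1) y)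
        = (if v1 ∈ S1 then 1 / (k:ℝ) else 0) * ∑ v2 ∈ S2, (1/(k:ℝ)) * u (Sum.inl v1) (Sum.inl v2) := by
      intro v1
      rw [Fintype.sum_sum_type]
      simp [mul_assoc, ← Finset.mul_sum, ite_mul, Finset.sum_ite_mem]
    rw [Finset.sum_congr rfl (fun v1 _ => this v1)]
    simp only [ite_mul, zero_mul]
    rw [Finset.sum_ite_mem, Finset.univ_inter]
    have hinner : ∀ v1 ∈ S1, (1/(k:ℝ)) * ∑ v2 ∈ S2, (1/(k:ℝ)) * u (Sum.inl v1) (Sum.inl v2) = 1/(k:ℝ) := by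
      intro v1 hv1
      rw [Finset.sum_congr rfl (fun v2 hv2 => by
        rw [hu, if_pos (hcomp v1 hv1 v2 hv2), mul_one])]
      rw [Finset.sum_const, h2, nsmul_eq_mul]
      field_simp
    rw [Finset.sum_congr rfl hinner, Finset.sum_const, h1, nsmul_eq_mul]
    field_simp
  refine ⟨⟨⟨?_, ?_⟩, ⟨?_, ?_⟩, ?_, ?_⟩, ?_, ?_, ?_⟩
  · rintro (v1 | v2) <;> simp <;> split <;> positivity
  · rw [Fintype.sum_sum_type]
    simp [Finset.sum_ite_mem, Finset.sum_const, h1, nsmul_eq_mul, hkne]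
  · rintro (v2 | v1) <;> simp <;> split <;> positivity
  · rw [Fintype.sum_sum_type]
    simp [Finset.sum_ite_mem, Finset.sum_const, h2, nsmul_eq_mul, hkne]
  · rintro (v1 | v2) hpos a'
    · have hv1 : v1 ∈ S1 := by
        by_contra h
        simp [h] at hpos
      rw [rowC, rowC1 v1 hv1]
      rcases a' with v1' | v2'
      · rw [rowC]; exact rowCle v1'
      · rw [rowE]; split <;> norm_num
    · simp at hpos
  · rintro (v2 | v1) hpos b'
    · have hv2 : v2 ∈ S2 := by
        by_contra h
        simp [h] at hpos
      rw [colC, colC1 v2 hv2]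
      rcases b' with v2' | v1'
      · rw [colC]; exact colCle v2'
      · rw [colE]; split <;> norm_num
    · simp at hpos
  · exact hdouble (bu1 E) (fun _ _ => rfl)
  · exact hdouble (bu2 E k) (fun _ _ => rfl)
  · exact hdouble (bu3 E k) (fun _ _ => rfl)
end
end

section
/- If S is a vertex cover of G with |S| ≤ K and f : {θ_1, …, θ_K} → A has image exactly {a_v : v ∈ S}, then under the commitment (f, 0) with the identically-zero payment function: the follower's induced utility is at most −1/K for every action b_e with e ∈ E and equals 0 for b_0; hence b_0 is the follower's unique best response and the leader's value of (f, 0) is 1. -/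
open Finset

noncomputable section

/- The vertex-cover game Γ_G: leader types are `Fin K` (each with prior 1/K), leader
actions are vertices `V` (`v` stands for `a_v`), follower actions are
`Option {e // e ∈ Edges}` (`none` is `b_0`, `some e` is `b_e`). -/

/-- Leader's utility (the same for every leader type). -/
def covu1 {V : Type*} (Edges : Finset (V × V)) :
    V → Option {e : V × V // e ∈ Edges} → ℝ :=
  fun _ b => match b with
    | none => 1
    | some _ => 0

/-- Follower's utility. -/
def covu2 {V : Type*} [DecidableEq V] (Edges : Finset (V × V)) (K : ℕ) :
    V → Option {e : V × V // e ∈ Edges} → ℝ :=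
  fun v b => match b with
    | none => 0
    | some e => if v = e.1.1 ∨ v = e.1.2 then -(K : ℝ) else 1

/-- Follower's induced utility under the pure commitment `(f, P)`. -/
def covFol {V : Type*} [DecidableEq V] (Edges : Finset (V × V)) (K : ℕ)
    (f : Fin K → V) (P : V → Option {e : V × V // e ∈ Edges} → ℝ)
    (b : Option {e : V × V // e ∈ Edges}) : ℝ :=
  (1 / (K : ℝ)) * ∑ i : Fin K, (covu2 Edges K (f i) b + P (f i) b)

/-- Leader's ex-ante utility under the pure commitment `(f, P)` when the follower plays `b`. -/
def covLead {V : Type*} [DecidableEq V] (Edges : Finset (V × V)) (K : ℕ)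
    (f : Fin K → V) (P : V → Option {e : V × V // e ∈ Edges} → ℝ)
    (b : Option {e : V × V // e ∈ Edges}) : ℝ :=
  (1 / (K : ℝ)) * ∑ i : Fin K, (covu1 Edges (f i) b - P (f i) b)

/-- The leader's value of the pure commitment `(f, P)`: the follower plays an action
maximizing his induced utility, tiebreaking in favor of the leader. -/
def covValue {V : Type*} [DecidableEq V] (Edges : Finset (V × V)) (K : ℕ)
    (f : Fin K → V) (P : V → Option {e : V × V // e ∈ Edges} → ℝ) : ℝ :=
  sSup {x | ∃ b, (∀ b', covFol Edges K f P b' ≤ covFol Edges K f P b) ∧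
    x = covLead Edges K f P b}


theorem stmt11 {V : Type*} [Fintype V] [DecidableEq V]
    (Edges : Finset (V × V)) (K : ℕ) (hK : 1 ≤ K)
    (S : Finset V) (hcover : ∀ e ∈ Edges, e.1 ∈ S ∨ e.2 ∈ S) (hcard : S.card ≤ K)
    (f : Fin K → V) (hf : Finset.image f Finset.univ = S) :
    (∀ (e : V × V) (he : e ∈ Edges),
        covFol Edges K f (fun _ _ => 0) (some ⟨e, he⟩) ≤ -(1 / (K : ℝ)))
    ∧ covFol Edges K f (fun _ _ => 0) none = 0
    ∧ (∀ b : Option {e : V × V // e ∈ Edges}, b ≠ none →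
        covFol Edges K f (fun _ _ => 0) b < covFol Edges K f (fun _ _ => 0) none)
    ∧ covValue Edges K f (fun _ _ => 0) = 1 := by
  have hK0 : (0:ℝ) < (K:ℝ) := by exact_mod_cast hK
  -- part 1
  have h1 : ∀ (e : V × V) (he : e ∈ Edges),
      covFol Edges K f (fun _ _ => 0) (some ⟨e, he⟩) ≤ -(1 / (K : ℝ)) := by
    intro e he
    -- find i with f i covering e
    have hv : e.1 ∈ S ∨ e.2 ∈ S := hcover e he
    have : ∃ i : Fin K, f i = e.1 ∨ f i = e.2 := by
      rcases hv with h | h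
      · rw [← hf] at h; rcases Finset.mem_image.1 h with ⟨i, _, hi⟩; exact ⟨i, Or.inl hi⟩
      · rw [← hf] at h; rcases Finset.mem_image.1 h with ⟨i, _, hi⟩; exact ⟨i, Or.inr hi⟩
    obtain ⟨i0, hi0⟩ := this
    have hsplit : ∑ i : Fin K, (covu2 Edges K (f i) (some ⟨e, he⟩) + 0)
        = (covu2 Edges K (f i0) (some ⟨e, he⟩) + 0)
          + ∑ i ∈ Finset.univ.erase i0, (covu2 Edges K (f i) (some ⟨e, he⟩) + 0) :=
      (Finset.add_sum_erase _ (fun i => covu2 Edges K (f i) (some ⟨e, he⟩) + 0)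
        (Finset.mem_univ i0)).symm
    have hterm : covu2 Edges K (f i0) (some ⟨e, he⟩) + 0 = -(K:ℝ) := by
      simp [covu2, hi0]
    have hrest : ∑ i ∈ Finset.univ.erase i0,
        (covu2 Edges K (f i) (some ⟨e, he⟩) + 0) ≤ (K:ℝ) - 1 := by
      calc ∑ i ∈ Finset.univ.erase i0, (covu2 Edges K (f i) (some ⟨e, he⟩) + 0)
          ≤ ∑ _i ∈ Finset.univ.erase i0, (1:ℝ) := by
            apply Finset.sum_le_sum
            intro i _
            simp only [covu2, add_zero]
            split
            · linarith
            · exact le_rfl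
        _ = ((Finset.univ.erase i0).card : ℝ) := by simp
        _ = (K:ℝ) - 1 := by
            rw [Finset.card_erase_of_mem (Finset.mem_univ i0), Finset.card_univ,
              Fintype.card_fin, Nat.cast_sub hK, Nat.cast_one]
    have hsum : ∑ i : Fin K, (covu2 Edges K (f i) (some ⟨e, he⟩) + 0) ≤ -1 := by
      rw [hsplit, hterm]; linarith
    have hmul : (1 / (K:ℝ)) * (∑ i : Fin K, (covu2 Edges K (f i) (some ⟨e, he⟩) + 0))
        ≤ (1 / (K:ℝ)) * (-1) := by
      apply mul_le_mul_of_nonneg_left hsum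
      positivity
    unfold covFol
    linarith
  have h2 : covFol Edges K f (fun _ _ => 0) none = 0 := by
    simp [covFol, covu2]
  have h3 : ∀ b : Option {e : V × V // e ∈ Edges}, b ≠ none →
      covFol Edges K f (fun _ _ => 0) b < covFol Edges K f (fun _ _ => 0) none := by
    intro b hb
    match b with
    | none => exact absurd rfl hb
    | some ⟨e, he⟩ =>
      rw [h2]
      have hpos : (0:ℝ) < 1 / (K:ℝ) := by positivity
      linarith [h1 e he]
  refine ⟨h1, h2, h3, ?_⟩
  have hmax : ∀ b', covFol Edges K f (fun _ _ => 0) b' ≤ covFol Edges K f (fun _ _ => 0) none := by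
    intro b'
    match b' with
    | none => exact le_rfl
    | some e => exact (h3 (some e) (by simp)).le
  have hlead : covLead Edges K f (fun _ _ => 0) none = 1 := by
    simp [covLead, covu1]
    field_simp
  have hset : {x | ∃ b, (∀ b', covFol Edges K f (fun _ _ => 0) b'
      ≤ covFol Edges K f (fun _ _ => 0) b) ∧ x = covLead Edges K f (fun _ _ => 0) b}
      = {(1:ℝ)} := by
    ext x
    constructor
    · rintro ⟨b, hb, rfl⟩
      have hbnone : b = none := by
        by_contra h
        exact absurd (hb none) (not_le.2 (h3 b h))
      simp [hbnone, hlead]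
    · rintro rfl
      exact ⟨none, hmax, hlead.symm⟩
  unfold covValue
  rw [hset]
  exact csSup_singleton 1
end
end

section
/- There exists a payment function P : {t_0, t_1, …, t_m} → ℝ≥0 whose leader value in the constructed Bayesian game is at least K if and only if there exists a price vector r ∈ ℝ^m_{≥0} with Rev(r) ≥ K. -/
open Finset

noncomputable section

/-- The buyer's surplus under prices `r`: `U(v, r) = max(0, max_i (v_i − r_i))`. -/
def buyerU {m : ℕ} (v r : Fin m → ℝ) : ℝ :=
  sSup ({0} ∪ {x : ℝ | ∃ i : Fin m, x = v i - r i})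

/-- The seller-favorable per-buyer revenue: the buyer buys an item maximizing `v_i − r_i`
provided this is ≥ 0, breaking all ties (including the tie with not buying) in favor of the
seller. -/
def sellerRho {m : ℕ} (v r : Fin m → ℝ) : ℝ :=
  sSup ({0} ∪ {x : ℝ | ∃ i : Fin m, v i - r i = buyerU v r ∧ x = r i})

/-- The seller's revenue from the price vector `r`. -/
def Rev {m : ℕ} (Vs : Finset (Fin m → ℝ)) (D : (Fin m → ℝ) → ℝ) (r : Fin m → ℝ) : ℝ :=
  ∑ v ∈ Vs, D v * sellerRho v r

/- The constructed Bayesian game: the leader has one action `s`; the follower's actions are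
`Option (Fin m)` (`none` is `t_0`, `some i` is `t_i`); follower types are the value vectors
in the support of `D`. -/

/-- Leader's utility: `u1(s, t_0) = 0` and `u1(s, t_i) = Z`. -/
def gameU1 {m : ℕ} (Z : ℝ) : Option (Fin m) → ℝ :=
  fun t => match t with
    | none => 0
    | some _ => Z

/-- Follower type `θ_v`'s utility: `u2(s, t_0) = 0` and `u2(s, t_i) = −Z + v_i`. -/
def gameU2 {m : ℕ} (Z : ℝ) (v : Fin m → ℝ) : Option (Fin m) → ℝ :=
  fun t => match t with
    | none => 0
    | some i => -Z + v i

/-- The leader's utility from follower type `θ_v` under payment function `P`: the type plays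
an action maximizing `u2 + P`, tiebreaking in favor of the leader's utility `u1 − P`. -/
def typeVal {m : ℕ} (Z : ℝ) (v : Fin m → ℝ) (P : Option (Fin m) → ℝ) : ℝ :=
  sSup {x | ∃ t : Option (Fin m),
    (∀ t' : Option (Fin m), gameU2 Z v t' + P t' ≤ gameU2 Z v t + P t) ∧
    x = gameU1 Z t - P t}

/-- The leader's value of the payment function `P`. -/
def leaderValG {m : ℕ} (Vs : Finset (Fin m → ℝ)) (D : (Fin m → ℝ) → ℝ) (Z : ℝ)
    (P : Option (Fin m) → ℝ) : ℝ :=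
  ∑ v ∈ Vs, D v * typeVal Z v P


/-! ### Auxiliary lemmas -/

section Aux
variable {m : ℕ}

lemma buyerU_set_finite (v r : Fin m → ℝ) :
    ({0} ∪ {x : ℝ | ∃ i : Fin m, x = v i - r i} : Set ℝ).Finite := by
  apply (Set.finite_singleton 0).union
  exact (Set.finite_range (fun i : Fin m => v i - r i)).subset
    (by rintro x ⟨i, rfl⟩; exact ⟨i, rfl⟩)

lemma buyerU_nonneg (v r : Fin m → ℝ) : 0 ≤ buyerU v r :=
  le_csSup (buyerU_set_finite v r).bddAbove (Or.inl rfl)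

lemma le_buyerU (v r : Fin m → ℝ) (i : Fin m) : v i - r i ≤ buyerU v r :=
  le_csSup (buyerU_set_finite v r).bddAbove (Or.inr ⟨i, rfl⟩)

lemma buyerU_mem (v r : Fin m → ℝ) :
    buyerU v r = 0 ∨ ∃ i : Fin m, buyerU v r = v i - r i := by
  have := Set.Nonempty.csSup_mem (s := ({0} ∪ {x : ℝ | ∃ i : Fin m, x = v i - r i} : Set ℝ))
    ⟨0, Or.inl rfl⟩ (buyerU_set_finite v r)
  rcases this with h | h
  · exact Or.inl h
  · exact Or.inr h

lemma sellerRho_set_finite (v r : Fin m → ℝ) :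
    ({0} ∪ {x : ℝ | ∃ i : Fin m, v i - r i = buyerU v r ∧ x = r i} : Set ℝ).Finite := by
  apply (Set.finite_singleton 0).union
  exact (Set.finite_range r).subset (by rintro x ⟨i, _, rfl⟩; exact ⟨i, rfl⟩)

lemma sellerRho_nonneg (v r : Fin m → ℝ) : 0 ≤ sellerRho v r :=
  le_csSup (sellerRho_set_finite v r).bddAbove (Or.inl rfl)

lemma le_sellerRho (v r : Fin m → ℝ) (i : Fin m) (h : v i - r i = buyerU v r) :
    r i ≤ sellerRho v r :=
  le_csSup (sellerRho_set_finite v r).bddAbove (Or.inr ⟨i, h, rfl⟩)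

lemma typeVal_set_finite (Z : ℝ) (v : Fin m → ℝ) (P : Option (Fin m) → ℝ) :
    {x | ∃ t : Option (Fin m),
      (∀ t' : Option (Fin m), gameU2 Z v t' + P t' ≤ gameU2 Z v t + P t) ∧
      x = gameU1 Z t - P t}.Finite :=
  (Set.finite_range (fun t : Option (Fin m) => gameU1 Z t - P t)).subset
    (by rintro x ⟨t, _, rfl⟩; exact ⟨t, rfl⟩)

lemma typeVal_set_nonempty (Z : ℝ) (v : Fin m → ℝ) (P : Option (Fin m) → ℝ) :
    {x | ∃ t : Option (Fin m),
      (∀ t' : Option (Fin m), gameU2 Z v t' + P t' ≤ gameU2 Z v t + P t) ∧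
      x = gameU1 Z t - P t}.Nonempty := by
  obtain ⟨t, ht⟩ := Finite.exists_max (fun t : Option (Fin m) => gameU2 Z v t + P t)
  exact ⟨gameU1 Z t - P t, t, fun t' => ht t', rfl⟩

lemma le_typeVal (Z : ℝ) (v : Fin m → ℝ) (P : Option (Fin m) → ℝ) (t : Option (Fin m))
    (ht : ∀ t' : Option (Fin m), gameU2 Z v t' + P t' ≤ gameU2 Z v t + P t) :
    gameU1 Z t - P t ≤ typeVal Z v P :=
  le_csSup (typeVal_set_finite Z v P).bddAbove ⟨t, ht, rfl⟩

end Aux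

theorem stmt12 {m : ℕ} (hm : 1 ≤ m)
    (Vs : Finset (Fin m → ℝ)) (hVs : Vs.Nonempty)
    (D : (Fin m → ℝ) → ℝ) (hD0 : ∀ v ∈ Vs, 0 < D v) (hD1 : ∑ v ∈ Vs, D v = 1)
    (hvnn : ∀ v ∈ Vs, ∀ i, 0 ≤ v i)
    (Z : ℝ) (hZ : ∀ v ∈ Vs, ∀ i, v i < Z) (K : ℝ) :
    (∃ P : Option (Fin m) → ℝ, (∀ t, 0 ≤ P t) ∧ K ≤ leaderValG Vs D Z P)
    ↔
    (∃ r : Fin m → ℝ, (∀ i, 0 ≤ r i) ∧ K ≤ Rev Vs D r) := by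
  constructor
  · -- payments → prices
    rintro ⟨P, hP0, hPK⟩
    set r : Fin m → ℝ := fun i => max 0 (Z - P (some i) + P none) with hr
    refine ⟨r, fun i => le_max_left _ _, ?_⟩
    refine hPK.trans ?_
    apply Finset.sum_le_sum
    intro v hv
    apply mul_le_mul_of_nonneg_left ?_ (hD0 v hv).le
    -- typeVal Z v P ≤ sellerRho v r
    apply csSup_le (typeVal_set_nonempty Z v P)
    rintro x ⟨t, hbest, rfl⟩
    match t with
    | none =>
      simp only [gameU1]
      have : -P none ≤ 0 := neg_nonpos.mpr (hP0 none)
      linarith [sellerRho_nonneg v r]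
    | some i =>
      simp only [gameU1]
      by_cases hqi : Z - P (some i) + P none ≤ 0
      · have : Z - P (some i) ≤ 0 := by linarith [hP0 none]
        linarith [sellerRho_nonneg v r]
      · push_neg at hqi
        have hri : r i = Z - P (some i) + P none := max_eq_right hqi.le
        have htie : v i - r i = buyerU v r := by
          have h1 : 0 ≤ v i - r i := by
            have := hbest none
            simp only [gameU2] at this
            rw [hri]; linarith
          have h2 : ∀ j : Fin m, v j - r j ≤ v i - r i := by
            intro j
            have hb := hbest (some j)
            simp only [gameU2] at hb
            have hrj : Z - P (some j) + P none ≤ r j := le_max_right _ _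
            rw [hri]; linarith
          rcases buyerU_mem v r with h | ⟨j, hj⟩
          · rw [h]
            exact le_antisymm (h ▸ le_buyerU v r i) h1
          · rw [hj]
            exact le_antisymm (hj ▸ le_buyerU v r i) (h2 j)
        have := le_sellerRho v r i htie
        rw [hri] at this
        linarith [hP0 none]
  · -- prices → payments
    rintro ⟨r, hr0, hrK⟩
    set r' : Fin m → ℝ := fun i => min (r i) Z with hr'
    set P : Option (Fin m) → ℝ := fun t => match t with
      | none => 0
      | some i => Z - r' i with hP
    have hZpos : 0 < Z := by
      obtain ⟨v0, hv0⟩ := hVs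
      exact lt_of_le_of_lt (hvnn v0 hv0 ⟨0, hm⟩) (hZ v0 hv0 ⟨0, hm⟩)
    have hP0 : ∀ t, 0 ≤ P t := by
      rintro (_ | i)
      · exact le_refl 0
      · simp only [hP]
        have : r' i ≤ Z := min_le_right _ _
        linarith
    refine ⟨P, hP0, hrK.trans ?_⟩
    apply Finset.sum_le_sum
    intro v hv
    apply mul_le_mul_of_nonneg_left ?_ (hD0 v hv).le
    -- sellerRho v r ≤ typeVal Z v P
    unfold sellerRho
    have hne : ({0} ∪ {x : ℝ | ∃ i : Fin m, v i - r i = buyerU v r ∧ x = r i} : Set ℝ).Nonempty :=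
      ⟨0, Or.inl rfl⟩
    refine csSup_le hne ?_
    rintro x (rfl | ⟨i, htie, rfl⟩)
    · -- 0 ≤ typeVal
      obtain ⟨y, t, hbest, rfl⟩ := typeVal_set_nonempty Z v P
      refine le_trans ?_ (le_typeVal Z v P t hbest)
      match t with
      | none => simp [gameU1, hP]
      | some j =>
        simp only [gameU1, hP]
        have h1 : 0 ≤ r' j := le_min (hr0 j) hZpos.le
        linarith
    · -- r i ≤ typeVal in case of a tie
      have hvi : 0 ≤ v i - r i := htie ▸ buyerU_nonneg v r
      have hviZ : v i < Z := hZ v hv i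
      have hriZ : r i ≤ Z := by linarith [hvnn v hv i]
      have hri' : r' i = r i := min_eq_left hriZ
      have hbest : ∀ t' : Option (Fin m), gameU2 Z v t' + P t' ≤ gameU2 Z v (some i) + P (some i) := by
        have heq : gameU2 Z v (some i) + P (some i) = v i - r i := by
          simp only [gameU2, hP, hri']; ring
        rintro (_ | j)
        · have hL : gameU2 Z v none + P none = 0 := by simp [gameU2, hP]
          rw [hL, heq]; exact hvi
        · have hL : gameU2 Z v (some j) + P (some j) = v j - r' j + (0 - 0) := by
            simp only [gameU2, hP]; ring
          rw [hL, heq]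
          have : v j - r' j ≤ buyerU v r := by
            rcases le_or_gt (r j) Z with h | h
            · have : r' j = r j := min_eq_left h
              rw [this]; exact le_buyerU v r j
            · have hj' : r' j = Z := min_eq_right h.le
              rw [hj']
              have : v j - Z ≤ 0 := by linarith [hZ v hv j]
              linarith [buyerU_nonneg v r]
          rw [← htie] at this
          linarith
      have := le_typeVal Z v P (some i) hbest
      simp only [gameU1, hP, hri'] at this
      linarith
end
end

section
/- Let G = (V, E) be a finite graph with |V| ≥ 4, let ε be a real with 0 < ε ≤ 1/|V|^5, and set δ̄ = 4/|V|^3. Suppose σ1, σ2 ∈ Δ(V) satisfy: (a) for every v ∈ V, (1 − p_v) · |V|/(|V|−2) ≤ 1 + 2ε, where p_v = 1 − (1 − σ1(v))(1 − σ2(v)); and (b) for every edge e = {v1, v2} ∈ E, (1 − σ1(v1) − σ1(v2)) · |V|/(|V|−2) ≤ 1 + 2ε. Then the set S = {v ∈ V : σ1(v) ≥ 2/|V| − 2ε − δ̄} has at most |V|/2 elements and contains at least one endpoint of every edge of G; in particular, G has a vertex cover of size at most |V|/2. -/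
open Finset

noncomputable section

/-!
Write `n = |V|`. Each hypothesis has the form `(1 - x) · n/(n-2) ≤ 1 + 2ε`, which gives
`x ≥ 2/n - 2ε`. Summing this over `x = p_v` yields `∑ σ1 σ2 ≤ 2εn`, so a vertex with
`σ1(v) ≥ 1/n - ε` has `σ2(v) < 4/n³`, and then `p_v ≤ σ1(v) + σ2(v)` puts it above the threshold
`2/n - 2ε - 4/n³`. Every edge has such an endpoint since `σ1(v1) + σ1(v2) ≥ 2/n - 2ε`. As the
threshold exceeds `2/(n+1)` and `σ1` has total mass 1, fewer than `(n+1)/2` vertices reach it.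
-/
theorem le_of_one_sub_mul_div_sub_two_le {n ε x : ℝ} (hn : 2 < n) (hε : 0 ≤ ε)
    (h : (1 - x) * (n / (n - 2)) ≤ 1 + 2 * ε) : 2 / n - 2 * ε ≤ x := by
  have hn2 : 0 < n - 2 := by linarith
  rw [mul_div_assoc', div_le_iff₀ hn2] at h
  rw [sub_le_iff_le_add, div_le_iff₀ (by linarith)]
  nlinarith

theorem sub_le_of_le_one_sub_mul_one_sub {a b c d x y : ℝ} (hx : 0 ≤ x) (hy : 0 ≤ y)
    (hd : 0 ≤ d) (hax : a ≤ x) (hxy : x * y ≤ b) (hb : b < a * d)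
    (hc : c ≤ 1 - (1 - x) * (1 - y)) : c - d ≤ x := by
  have hyd : y < d := by
    by_contra! h
    linarith [mul_le_mul_of_nonneg_left h hx, mul_le_mul_of_nonneg_right hax hd]
  nlinarith [mul_nonneg hx hy]

namespace IsDist

variable {X : Type*} [Fintype X] {σ σ' : X → ℝ}

theorem sum_mul_le_s14 (h : IsDist σ) (h' : IsDist σ') {c : ℝ}
    (hc : ∀ x, c ≤ 1 - (1 - σ x) * (1 - σ' x)) :
    ∑ x, σ x * σ' x ≤ 2 - Fintype.card X * c := by
  have hunion : ∑ x, (1 - (1 - σ x) * (1 - σ' x)) = 2 - ∑ x, σ x * σ' x := by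
    simp only [show ∀ x, 1 - (1 - σ x) * (1 - σ' x) = σ x + σ' x - σ x * σ' x from
      fun x => by ring]
    rw [sum_sub_distrib, sum_add_distrib, h.2, h'.2]; ring
  have hlower := card_nsmul_le_sum univ _ c fun x _ => hc x
  rw [hunion, nsmul_eq_mul, card_univ] at hlower
  linarith

theorem card_filter_le_half (h : IsDist σ) {t : ℝ}
    (ht : 2 < (Fintype.card X + 1) * t) :
    ((univ.filter fun x => t ≤ σ x).card : ℝ) ≤ Fintype.card X / 2 := by
  set S := univ.filter fun x => t ≤ σ x
  have hmass : S.card * t ≤ 1 := by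
    calc S.card * t = S.card • t := (nsmul_eq_mul _ _).symm
      _ ≤ ∑ x ∈ S, σ x := card_nsmul_le_sum S σ t fun x hx => (mem_filter.mp hx).2
      _ ≤ ∑ x, σ x := sum_le_sum_of_subset_of_nonneg (subset_univ S) fun x _ _ => h.1 x
      _ = 1 := h.2
  have hlt : 2 * S.card < Fintype.card X + 1 := by
    have hS0 : (0 : ℝ) ≤ S.card := S.card.cast_nonneg
    exact_mod_cast (by nlinarith : (2 * S.card : ℝ) < Fintype.card X + 1)
  rw [le_div_iff₀ two_pos]
  exact_mod_cast (by omega : S.card * 2 ≤ Fintype.card X)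

end IsDist

section
variable {n ε : ℝ}

theorem two_mul_mul_lt_one_div_sub_mul (hn : 4 ≤ n) (hε : ε ≤ 1 / n ^ 5) :
    2 * ε * n < (1 / n - ε) * (4 / n ^ 3) := by
  have hn0 : 0 < n := by linarith
  have h5 : ε * n ^ 5 ≤ 1 := by rwa [le_div_iff₀ (by positivity)] at hε
  have hclear : (1 / n - ε) * (4 / n ^ 3) = (4 - 4 * ε * n) / n ^ 4 := by field_simp
  have h1 : ε * n ≤ 1 / 4 := by nlinarith [pow_le_pow_left₀ (by norm_num) hn 4]
  rw [hclear, lt_div_iff₀ (by positivity)]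
  nlinarith

theorem two_lt_add_one_mul (hn : 4 ≤ n) (hε : ε ≤ 1 / n ^ 5) :
    2 < (n + 1) * (2 / n - 2 * ε - 4 / n ^ 3) := by
  have hn0 : 0 < n := by linarith
  have h5 : ε * n ^ 5 ≤ 1 := by rwa [le_div_iff₀ (by positivity)] at hε
  have hclear : (n + 1) * (2 / n - 2 * ε - 4 / n ^ 3)
      = (n + 1) * (2 * n ^ 2 - 2 * ε * n ^ 3 - 4) / n ^ 3 := by field_simp
  have h4 : ε * n ^ 4 ≤ 1 / 4 := by nlinarith
  have h3 : ε * n ^ 3 ≤ 1 / 16 := by nlinarith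
  rw [hclear, lt_div_iff₀ (by positivity)]
  nlinarith
end

open Classical in
theorem stmt14_general {V : Type*} [Fintype V] (E : Finset (V × V))
    (hV : 4 ≤ Fintype.card V)
    (ε : ℝ) (hε0 : 0 < ε) (hε1 : ε ≤ 1 / (Fintype.card V : ℝ) ^ 5)
    (σ1 σ2 : V → ℝ) (h1 : IsDist σ1) (h2 : IsDist σ2)
    (ha : ∀ v : V,
      (1 - (1 - (1 - σ1 v) * (1 - σ2 v)))
          * ((Fintype.card V : ℝ) / ((Fintype.card V : ℝ) - 2)) ≤ 1 + 2 * ε)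
    (hb : ∀ e ∈ E,
      (1 - σ1 e.1 - σ1 e.2)
          * ((Fintype.card V : ℝ) / ((Fintype.card V : ℝ) - 2)) ≤ 1 + 2 * ε) :
    (((Finset.univ.filter (fun v : V =>
          2 / (Fintype.card V : ℝ) - 2 * ε - 4 / (Fintype.card V : ℝ) ^ 3 ≤ σ1 v)).card : ℝ)
        ≤ (Fintype.card V : ℝ) / 2
      ∧ ∀ e ∈ E,
          e.1 ∈ Finset.univ.filter (fun v : V =>
              2 / (Fintype.card V : ℝ) - 2 * ε - 4 / (Fintype.card V : ℝ) ^ 3 ≤ σ1 v)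
          ∨ e.2 ∈ Finset.univ.filter (fun v : V =>
              2 / (Fintype.card V : ℝ) - 2 * ε - 4 / (Fintype.card V : ℝ) ^ 3 ≤ σ1 v))
    ∧ ∃ S' : Finset V, ((S'.card : ℝ) ≤ (Fintype.card V : ℝ) / 2
        ∧ ∀ e ∈ E, e.1 ∈ S' ∨ e.2 ∈ S') := by
  have hn : (4 : ℝ) ≤ Fintype.card V := by exact_mod_cast hV
  set n : ℝ := (Fintype.card V : ℝ)
  have hvertex (v : V) : 2 / n - 2 * ε ≤ 1 - (1 - σ1 v) * (1 - σ2 v) :=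
    le_of_one_sub_mul_div_sub_two_le (by linarith) hε0.le (ha v)
  have hedge (e) (he : e ∈ E) : 2 / n - 2 * ε ≤ σ1 e.1 + σ1 e.2 :=
    le_of_one_sub_mul_div_sub_two_le (by linarith) hε0.le (by simpa only [sub_sub] using hb e he)
  have hsum : ∑ v, σ1 v * σ2 v ≤ 2 * ε * n :=
    (h1.sum_mul_le_s14 h2 hvertex).trans_eq (by field_simp; ring)
  have hheavy (v : V) (hv : 1 / n - ε ≤ σ1 v) : 2 / n - 2 * ε - 4 / n ^ 3 ≤ σ1 v :=
    sub_le_of_le_one_sub_mul_one_sub (h1.1 v) (h2.1 v) (by positivity) hv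
      ((single_le_sum (fun w _ => mul_nonneg (h1.1 w) (h2.1 w)) (mem_univ v)).trans hsum)
      (two_mul_mul_lt_one_div_sub_mul hn hε1) (hvertex v)
  have hcover : ∀ e ∈ E, e.1 ∈ univ.filter (fun v => 2 / n - 2 * ε - 4 / n ^ 3 ≤ σ1 v) ∨
      e.2 ∈ univ.filter (fun v => 2 / n - 2 * ε - 4 / n ^ 3 ≤ σ1 v) := by
    intro e he
    simp only [mem_filter, mem_univ, true_and]
    have hhalf : 2 / n = 1 / n + 1 / n := by ring
    rcases le_total (σ1 e.1) (σ1 e.2) with hle | hle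
    · exact .inr (hheavy _ (by linarith [hedge e he]))
    · exact .inl (hheavy _ (by linarith [hedge e he]))
  have hcard := h1.card_filter_le_half (two_lt_add_one_mul hn hε1)
  exact ⟨⟨hcard, hcover⟩, _, hcard, hcover⟩

open Classical in
theorem stmt14 {V : Type*} [Fintype V] [DecidableEq V] (E : Finset (V × V))
    (hV : 4 ≤ Fintype.card V)
    (ε : ℝ) (hε0 : 0 < ε) (hε1 : ε ≤ 1 / (Fintype.card V : ℝ) ^ 5)
    (σ1 σ2 : V → ℝ) (h1 : IsDist σ1) (h2 : IsDist σ2)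
    (ha : ∀ v : V,
      (1 - (1 - (1 - σ1 v) * (1 - σ2 v)))
          * ((Fintype.card V : ℝ) / ((Fintype.card V : ℝ) - 2)) ≤ 1 + 2 * ε)
    (hb : ∀ e ∈ E,
      (1 - σ1 e.1 - σ1 e.2)
          * ((Fintype.card V : ℝ) / ((Fintype.card V : ℝ) - 2)) ≤ 1 + 2 * ε) :
    (((Finset.univ.filter (fun v : V =>
          2 / (Fintype.card V : ℝ) - 2 * ε - 4 / (Fintype.card V : ℝ) ^ 3 ≤ σ1 v)).card : ℝ)
        ≤ (Fintype.card V : ℝ) / 2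
      ∧ ∀ e ∈ E,
          e.1 ∈ Finset.univ.filter (fun v : V =>
              2 / (Fintype.card V : ℝ) - 2 * ε - 4 / (Fintype.card V : ℝ) ^ 3 ≤ σ1 v)
          ∨ e.2 ∈ Finset.univ.filter (fun v : V =>
              2 / (Fintype.card V : ℝ) - 2 * ε - 4 / (Fintype.card V : ℝ) ^ 3 ≤ σ1 v))
    ∧ ∃ S' : Finset V, ((S'.card : ℝ) ≤ (Fintype.card V : ℝ) / 2
        ∧ ∀ e ∈ E, e.1 ∈ S' ∨ e.2 ∈ S') :=
  stmt14_general E hV ε hε0 hε1 σ1 σ2 h1 h2 ha hb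
end
end

section
/- For every finite two-player game, the supremum over all commitments (σ, P) — with σ ∈ Δ(A) and P : A × B → ℝ≥0 — of the leader's value equals max over b ∈ B of the optimal value of the program: maximize Σ_{a∈A} σ(a) u1(a,b) − c over σ ∈ Δ(A) and c ≥ 0 subject to Σ_{a∈A} σ(a) u2(a,b) + c ≥ Σ_{a∈A} σ(a) u2(a,b') for every b' ∈ B. Moreover, both the outer supremum and each inner program's optimum are attained. -/
open Finset

noncomputable section

/-- The set of leader values achievable by commitments `(σ, P)`. -/
def CommitVals {A B : Type*} [Fintype A] [Fintype B] (u1 u2 : A → B → ℝ) : Set ℝ :=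
  {x | ∃ (σ : A → ℝ) (P : A → B → ℝ), IsDist σ ∧ (∀ a b, 0 ≤ P a b) ∧
    x = leaderValue u1 u2 σ P}

/-- The feasible objective values of the LP for incentivizing the follower action `b`:
maximize `Σ_a σ(a) u1(a,b) − c` over `σ ∈ Δ(A)` and `c ≥ 0` subject to
`Σ_a σ(a) u2(a,b) + c ≥ Σ_a σ(a) u2(a,b')` for every `b'`. -/
def InnerSet {A B : Type*} [Fintype A] (u1 u2 : A → B → ℝ) (b : B) : Set ℝ :=
  {x | ∃ (σ : A → ℝ) (c : ℝ), IsDist σ ∧ 0 ≤ c ∧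
    (∀ b' : B, (∑ a, σ a * u2 a b') ≤ (∑ a, σ a * u2 a b) + c) ∧
    x = (∑ a, σ a * u1 a b) - c}

/-!
Under a commitment `(σ, P)` to which the follower answers `b`, the pair `σ` and
`c = Σ_a σ(a) P(a,b)` is feasible in the program for `b` with objective equal to the leader's
value; conversely a feasible `(σ, c)` is realised by paying `c` on `b` alone, which makes `b` a
best response. The program for `b` attains its optimum because, for the least feasible `c`, its
objective is a continuous function of `σ` on the compact simplex.
-/

section

variable {A B : Type*} [Fintype A]

lemma folU_eq (u2 : A → B → ℝ) (σ : A → ℝ) (P : A → B → ℝ) (b : B) :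
    folU u2 σ P b = ∑ a, σ a * u2 a b + ∑ a, σ a * P a b := by
  simp only [folU, mul_add, sum_add_distrib]

lemma leadU_eq (u1 : A → B → ℝ) (σ : A → ℝ) (P : A → B → ℝ) (b : B) :
    leadU u1 σ P b = ∑ a, σ a * u1 a b - ∑ a, σ a * P a b := by
  simp only [leadU, mul_sub, sum_sub_distrib]

lemma leadU_mem_innerSet {u1 u2 : A → B → ℝ} {σ : A → ℝ} {P : A → B → ℝ} (hσ : IsDist σ)
    (hP : ∀ a b, 0 ≤ P a b) {b : B} (hb : ∀ b', folU u2 σ P b' ≤ folU u2 σ P b) :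
    leadU u1 σ P b ∈ InnerSet u1 u2 b := by
  have hpay : ∀ b', 0 ≤ ∑ a, σ a * P a b' := fun b' =>
    sum_nonneg fun a _ => mul_nonneg (hσ.1 a) (hP a b')
  refine ⟨σ, _, hσ, hpay b, fun b' => ?_, leadU_eq u1 σ P b⟩
  have := hb b'
  rw [folU_eq, folU_eq] at this
  linarith [hpay b']

variable [Fintype B]

/-- The least `c` feasible in the program for `b` at `σ`; the term `b' = b` makes it
nonnegative. -/
def minIncentive (u2 : A → B → ℝ) (σ : A → ℝ) (b : B) : ℝ :=
  univ.sup' (univ_nonempty_iff.2 ⟨b⟩) fun b' => ∑ a, σ a * u2 a b' - ∑ a, σ a * u2 a b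

def innerObjective (u1 u2 : A → B → ℝ) (b : B) (σ : A → ℝ) : ℝ :=
  ∑ a, σ a * u1 a b - minIncentive u2 σ b

lemma minIncentive_le_iff {u2 : A → B → ℝ} {σ : A → ℝ} {b : B} {c : ℝ} :
    minIncentive u2 σ b ≤ c ↔ ∀ b', ∑ a, σ a * u2 a b' ≤ ∑ a, σ a * u2 a b + c := by
  rw [minIncentive, sup'_le_iff]
  simp only [mem_univ, true_implies, sub_le_iff_le_add']

lemma minIncentive_nonneg (u2 : A → B → ℝ) (σ : A → ℝ) (b : B) : 0 ≤ minIncentive u2 σ b :=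
  le_of_eq_of_le (sub_self _).symm (le_sup' (fun b' => ∑ a, σ a * u2 a b' - ∑ a, σ a * u2 a b)
    (mem_univ b))

lemma continuous_minIncentive (u2 : A → B → ℝ) (b : B) :
    Continuous fun σ => minIncentive u2 σ b := by
  unfold minIncentive
  fun_prop

lemma continuous_innerObjective (u1 u2 : A → B → ℝ) (b : B) :
    Continuous (innerObjective u1 u2 b) :=
  (by fun_prop : Continuous fun σ : A → ℝ => ∑ a, σ a * u1 a b).sub
    (continuous_minIncentive u2 b)

lemma mem_innerSet_iff {u1 u2 : A → B → ℝ} {b : B} {x : ℝ} :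
    x ∈ InnerSet u1 u2 b ↔ ∃ σ, IsDist σ ∧ x ≤ innerObjective u1 u2 b σ := by
  constructor
  · rintro ⟨σ, c, hσ, -, hc, rfl⟩
    exact ⟨σ, hσ, sub_le_sub_left (minIncentive_le_iff.2 hc) _⟩
  · rintro ⟨σ, hσ, hx⟩
    have hc : minIncentive u2 σ b ≤ ∑ a, σ a * u1 a b - x := by
      unfold innerObjective at hx; linarith
    exact ⟨σ, _, hσ, (minIncentive_nonneg u2 σ b).trans hc, minIncentive_le_iff.1 hc,
      (sub_sub_cancel _ _).symm⟩

lemma isGreatest_sSup_innerSet [Nonempty A] (u1 u2 : A → B → ℝ) (b : B) :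
    IsGreatest (InnerSet u1 u2 b) (sSup (InnerSet u1 u2 b)) := by
  classical
  obtain ⟨σ, hσ, hmax⟩ := (isCompact_stdSimplex ℝ A).exists_isMaxOn
    ⟨_, single_mem_stdSimplex ℝ (Classical.arbitrary A)⟩
    (continuous_innerObjective u1 u2 b).continuousOn
  have hgreatest : IsGreatest (InnerSet u1 u2 b) (innerObjective u1 u2 b σ) := by
    refine ⟨mem_innerSet_iff.2 ⟨σ, hσ, le_rfl⟩, fun x hx => ?_⟩
    obtain ⟨τ, hτ, hx⟩ := mem_innerSet_iff.1 hx
    exact hx.trans (hmax hτ)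
  rwa [hgreatest.csSup_eq]

lemma finite_setOf_leadU_of_bestResponse (u1 u2 : A → B → ℝ) (σ : A → ℝ) (P : A → B → ℝ) :
    {x | ∃ b, (∀ b', folU u2 σ P b' ≤ folU u2 σ P b) ∧ x = leadU u1 σ P b}.Finite :=
  (Set.finite_range (leadU u1 σ P)).subset fun _ ⟨b, _, hx⟩ => ⟨b, hx.symm⟩

lemma le_leaderValue {u1 u2 : A → B → ℝ} {σ : A → ℝ} {P : A → B → ℝ} {b : B}
    (hb : ∀ b', folU u2 σ P b' ≤ folU u2 σ P b) : leadU u1 σ P b ≤ leaderValue u1 u2 σ P :=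
  le_csSup (finite_setOf_leadU_of_bestResponse u1 u2 σ P).bddAbove ⟨b, hb, rfl⟩

lemma exists_leaderValue_eq_leadU [Nonempty B] (u1 u2 : A → B → ℝ) (σ : A → ℝ)
    (P : A → B → ℝ) : ∃ b, (∀ b', folU u2 σ P b' ≤ folU u2 σ P b) ∧
      leaderValue u1 u2 σ P = leadU u1 σ P b := by
  obtain ⟨b₀, -, hb₀⟩ := exists_max_image univ (folU u2 σ P) univ_nonempty
  refine Set.Nonempty.csSup_mem ?_ (finite_setOf_leadU_of_bestResponse u1 u2 σ P)
  exact ⟨_, b₀, fun b' => hb₀ b' (mem_univ b'), rfl⟩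

lemma exists_mem_innerSet_of_mem_commitVals [Nonempty B] {u1 u2 : A → B → ℝ} {v : ℝ}
    (hv : v ∈ CommitVals u1 u2) : ∃ b, v ∈ InnerSet u1 u2 b := by
  obtain ⟨σ, P, hσ, hP, rfl⟩ := hv
  obtain ⟨b, hb, heq⟩ := exists_leaderValue_eq_leadU u1 u2 σ P
  exact ⟨b, heq ▸ leadU_mem_innerSet hσ hP hb⟩

lemma exists_mem_commitVals_ge_of_mem_innerSet {u1 u2 : A → B → ℝ} {b : B} {x : ℝ}
    (hx : x ∈ InnerSet u1 u2 b) : ∃ v ∈ CommitVals u1 u2, x ≤ v := by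
  classical
  obtain ⟨σ, c, hσ, hc, hcons, rfl⟩ := hx
  set P : A → B → ℝ := fun _ => (Pi.single b c : B → ℝ)
  have hpay : ∀ b', ∑ a, σ a * P a b' = (Pi.single b c : B → ℝ) b' := fun b' => by
    rw [← sum_mul, hσ.2, one_mul]
  have hP : ∀ a b', 0 ≤ P a b' := fun _ => (Pi.single_nonneg.2 hc : 0 ≤ P _)
  have hb : ∀ b', folU u2 σ P b' ≤ folU u2 σ P b := fun b' => by
    rw [folU_eq, folU_eq, hpay, hpay, Pi.single_eq_same]
    by_cases h : b' = b
    · rw [h, Pi.single_eq_same]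
    · rw [Pi.single_eq_of_ne h]; linarith [hcons b']
  refine ⟨_, ⟨σ, P, hσ, hP, rfl⟩, ?_⟩
  calc ∑ a, σ a * u1 a b - c = leadU u1 σ P b := by rw [leadU_eq, hpay, Pi.single_eq_same]
    _ ≤ leaderValue u1 u2 σ P := le_leaderValue hb

end

theorem stmt16 {A B : Type*} [Fintype A] [Fintype B] [Nonempty A] [Nonempty B]
    (u1 u2 : A → B → ℝ) :
    IsGreatest (CommitVals u1 u2) (sSup {y | ∃ b : B, y = sSup (InnerSet u1 u2 b)})
    ∧ ∀ b : B, IsGreatest (InnerSet u1 u2 b) (sSup (InnerSet u1 u2 b)) := by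
  have hinner := isGreatest_sSup_innerSet (A := A) u1 u2
  obtain ⟨bs, hbs⟩ := Finite.exists_max fun b => sSup (InnerSet u1 u2 b)
  have hmax : IsGreatest {y | ∃ b : B, y = sSup (InnerSet u1 u2 b)} (sSup (InnerSet u1 u2 bs)) :=
    ⟨⟨bs, rfl⟩, by rintro _ ⟨b, rfl⟩; exact hbs b⟩
  rw [hmax.csSup_eq]
  have hub : sSup (InnerSet u1 u2 bs) ∈ upperBounds (CommitVals u1 u2) := fun v hv => by
    obtain ⟨b, hb⟩ := exists_mem_innerSet_of_mem_commitVals hv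
    exact ((hinner b).2 hb).trans (hbs b)
  obtain ⟨v, hv, hle⟩ := exists_mem_commitVals_ge_of_mem_innerSet (hinner bs).1
  exact ⟨⟨le_antisymm (hub hv) hle ▸ hv, hub⟩, hinner⟩
end
end

section
/- For every general signaling commitment (D1, M, S, P) together with an equilibrium (σ_2, …, σ_n) of the game it induces, there exists an incentive-compatible correlated commitment (D, P̄), with D ∈ Δ(A) and P̄_i : A_i → ℝ≥0 for each i ∈ {2, …, n}, such that: (i) D equals the joint distribution of the outcome (a_1, a_2, …, a_n) obtained by drawing a_1 ∼ D1, s ∼ S(a_1), and independently a_i ∼ σ_i(s_i) for each follower i; and (ii) for each follower i, the expected payment Σ_{a∈A} D(a) P̄_i(a_i) equals the expected value of P_i(a, s) under the same draw. In particular, the leader's expected utility after payments is the same under both commitments. -/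
open Finset

noncomputable section

/- Outcomes are pairs `(a1, b)` with `a1 : A1` the leader's action and `b : ∀ i, A i` the
followers' action profile (`F` indexes the followers). -/

/-- The marginal probability that follower `i` is recommended `ai` under `D`. -/
def margF {A1 : Type*} {F : Type*} {A : F → Type*} [Fintype A1] [Fintype F] [DecidableEq F]
    [∀ i, Fintype (A i)] [∀ i, DecidableEq (A i)]
    (D : A1 × (∀ j, A j) → ℝ) (i : F) (ai : A i) : ℝ :=
  ∑ a ∈ Finset.univ.filter (fun a : A1 × (∀ j, A j) => a.2 i = ai), D a

/-- Incentive compatibility of a correlated commitment `(D, Pb)`: every follower is willing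
to follow every recommendation he receives with positive probability. -/
def ICF {A1 : Type*} {F : Type*} {A : F → Type*} [Fintype A1] [Fintype F] [DecidableEq F]
    [∀ i, Fintype (A i)] [∀ i, DecidableEq (A i)]
    (u : ∀ _ : F, A1 × (∀ j, A j) → ℝ) (D : A1 × (∀ j, A j) → ℝ)
    (Pb : ∀ i : F, A i → ℝ) : Prop :=
  ∀ (i : F) (ai : A i), 0 < margF D i ai → ∀ ai' : A i,
    (∑ a ∈ Finset.univ.filter (fun a : A1 × (∀ j, A j) => a.2 i = ai),
        (D a / margF D i ai) * u i (a.1, Function.update a.2 i ai'))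
      ≤ (∑ a ∈ Finset.univ.filter (fun a : A1 × (∀ j, A j) => a.2 i = ai),
          (D a / margF D i ai) * u i a) + Pb i ai

/-- The joint distribution over outcomes induced by a general signaling commitment
`(D1, S)` and follower strategies `σ`: draw `a1 ∼ D1`, `s ∼ S(a1)`, and independently
`a_i ∼ σ_i(s_i)` for each follower `i`. -/
def jointD {A1 : Type*} {F : Type*} {A : F → Type*} {M : Type*}
    [Fintype A1] [Fintype F] [DecidableEq F] [∀ i, Fintype (A i)] [Fintype M]
    (D1 : A1 → ℝ) (S : A1 → (F → M) → ℝ) (σ : ∀ i : F, M → A i → ℝ) :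
    A1 × (∀ j, A j) → ℝ :=
  fun a => ∑ s : F → M, D1 a.1 * S a.1 s * ∏ i, σ i (s i) (a.2 i)

/-- `(σ_2, …, σ_n)` is an equilibrium of the game induced by the general signaling
commitment `(D1, M, S, P)`: for each follower `i` and each message `k` received with
positive probability, every action in the support of `σ i k` maximizes `i`'s expected
utility plus expected payment conditional on receiving `k` (stated in the equivalent form
multiplied through by the probability of receiving `k`). -/
def SigEqm {A1 : Type*} {F : Type*} {A : F → Type*} {M : Type*}
    [Fintype A1] [Fintype F] [DecidableEq F] [∀ i, Fintype (A i)] [∀ i, DecidableEq (A i)]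
    [Fintype M] [DecidableEq M]
    (u : ∀ _ : F, A1 × (∀ j, A j) → ℝ)
    (P : ∀ _ : F, A1 × (∀ j, A j) → (F → M) → ℝ)
    (D1 : A1 → ℝ) (S : A1 → (F → M) → ℝ) (σ : ∀ i : F, M → A i → ℝ) : Prop :=
  ∀ (i : F) (k : M),
    (0 < ∑ a1 : A1, ∑ s ∈ Finset.univ.filter (fun s : F → M => s i = k), D1 a1 * S a1 s) →
    ∀ ai : A i, 0 < σ i k ai → ∀ ai' : A i,
      (∑ a1 : A1, ∑ s ∈ Finset.univ.filter (fun s : F → M => s i = k), ∑ b : ∀ j, A j,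
          D1 a1 * S a1 s * (∏ j, σ j (s j) (b j)) *
            (u i (a1, Function.update b i ai') + P i (a1, Function.update b i ai') s))
        ≤ (∑ a1 : A1, ∑ s ∈ Finset.univ.filter (fun s : F → M => s i = k), ∑ b : ∀ j, A j,
            D1 a1 * S a1 s * (∏ j, σ j (s j) (b j)) *
              (u i (a1, Function.update b i ai) + P i (a1, Function.update b i ai) s))

/-! The correlated commitment recommends the outcome distribution `jointD` of the signaling
commitment and pays follower `i`, when recommended `t`, his expected signaling payment
conditional on that recommendation; payments then agree in expectation by construction.

For incentive compatibility, condition on the signal profile: followers then randomize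
independently, so conditioning on the recommendation `b i = t` merely reweights each message `k`
by `σ i k t`. Hence the gain of a follower recommended `t` from deviating to `t'` is the
`σ i k t`-weighted sum over messages `k` of his gain from playing `t'` instead of `t` on
receiving `k`, and each of these is nonpositive by the equilibrium condition. Payments are
nonnegative, so dropping the payment after a deviation only strengthens the inequality. -/

open Function

section FiberSums

variable {F : Type*} {A : F → Type*} [Fintype F] [DecidableEq F] [∀ i, Fintype (A i)]
  [∀ i, DecidableEq (A i)]

lemma sum_filter_apply_eq_of_update_invariant {R : Type*} [AddCommMonoid R] (i : F)
    (ψ : (∀ j, A j) → R) (hψ : ∀ b x, ψ (update b i x) = ψ b) (t t' : A i) :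
    ∑ b ∈ univ.filter (fun b : ∀ j, A j => b i = t), ψ b
      = ∑ b ∈ univ.filter (fun b : ∀ j, A j => b i = t'), ψ b := by
  refine sum_nbij' (fun b => update b i t') (fun b => update b i t) ?_ ?_ ?_ ?_ ?_
    <;> intro b hb
  · simp
  · simp
  · rw [(mem_filter.1 hb).2.symm]; simp
  · rw [(mem_filter.1 hb).2.symm]; simp
  · exact (hψ b t').symm

lemma sum_filter_apply_mul_of_update_invariant {R : Type*} [CommSemiring R] (i : F)
    (c : A i → R) (hc : ∑ t, c t = 1) (ψ : (∀ j, A j) → R)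
    (hψ : ∀ b x, ψ (update b i x) = ψ b) (t : A i) :
    ∑ b ∈ univ.filter (fun b : ∀ j, A j => b i = t), c (b i) * ψ b
      = c t * ∑ b, c (b i) * ψ b := by
  have fiber : ∀ t', ∑ b ∈ univ.filter (fun b : ∀ j, A j => b i = t'), c (b i) * ψ b
      = c t' * ∑ b ∈ univ.filter (fun b : ∀ j, A j => b i = t), ψ b := fun t' => by
    rw [sum_filter_apply_eq_of_update_invariant i ψ hψ t t', mul_sum]
    exact sum_congr rfl fun b hb => by rw [(mem_filter.1 hb).2]
  rw [← sum_fiberwise univ (fun b : ∀ j, A j => b i), sum_congr rfl fun t' _ => fiber t',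
    ← sum_mul, hc, one_mul, fiber]

lemma sum_filter_prod_mul_of_update_invariant {R : Type*} [CommSemiring R] (i : F)
    (c : ∀ j, A j → R) (hc : ∑ t, c i t = 1) (g : (∀ j, A j) → R)
    (hg : ∀ b x, g (update b i x) = g b) (t : A i) :
    ∑ b ∈ univ.filter (fun b : ∀ j, A j => b i = t), (∏ j, c j (b j)) * g b
      = c i t * ∑ b, (∏ j, c j (b j)) * g b := by
  have split : ∀ b : ∀ j, A j, (∏ j, c j (b j)) * g b
      = c i (b i) * ((∏ j ∈ univ.erase i, c j (b j)) * g b) := fun b => by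
    rw [← mul_prod_erase univ (fun j => c j (b j)) (mem_univ i), mul_assoc]
  simp only [split]
  refine sum_filter_apply_mul_of_update_invariant i (c i) hc _ (fun b x => ?_) t
  rw [hg, prod_congr rfl fun j hj => by rw [update_of_ne (ne_of_mem_erase hj)]]

end FiberSums

section Incentives

variable {A1 F : Type*} {A : F → Type*} [Fintype A1] [Fintype F] [DecidableEq F]
  [∀ i, Fintype (A i)] [∀ i, DecidableEq (A i)]

lemma ICF_of_sum_filter_le {u : ∀ _ : F, A1 × (∀ j, A j) → ℝ}
    {D : A1 × (∀ j, A j) → ℝ} {Pb : ∀ i : F, A i → ℝ}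
    (h : ∀ i t, 0 < margF D i t → ∀ t',
      ∑ a ∈ univ.filter (fun a : A1 × (∀ j, A j) => a.2 i = t),
          D a * u i (a.1, update a.2 i t')
        ≤ ∑ a ∈ univ.filter (fun a : A1 × (∀ j, A j) => a.2 i = t), D a * u i a
          + margF D i t * Pb i t) :
    ICF u D Pb := by
  intro i t ht t'
  simp only [div_mul_eq_mul_div, ← sum_div]
  rw [div_add' _ _ _ ht.ne', div_le_div_iff_of_pos_right ht, mul_comm (Pb i t)]
  exact h i t ht t'

end Incentives

section Signaling

variable {A1 F M : Type*} {A : F → Type*} [Fintype F]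
  (D1 : A1 → ℝ) (S : A1 → (F → M) → ℝ) (σ : ∀ i : F, M → A i → ℝ)

def sigWeight (a1 : A1) (s : F → M) (b : ∀ j, A j) : ℝ :=
  D1 a1 * S a1 s * ∏ j, σ j (s j) (b j)

variable {D1 S σ}

lemma sigWeight_nonneg (hD1 : ∀ a1, 0 ≤ D1 a1) (hS : ∀ a1 s, 0 ≤ S a1 s)
    (hσ : ∀ i k t, 0 ≤ σ i k t) (a1 : A1) (s : F → M) (b : ∀ j, A j) :
    0 ≤ sigWeight D1 S σ a1 s b :=
  mul_nonneg (mul_nonneg (hD1 a1) (hS a1 s)) (prod_nonneg fun j _ => hσ j (s j) (b j))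

variable [Fintype A1] [DecidableEq F] [∀ i, Fintype (A i)] [Fintype M]

lemma sum_jointD_mul (f : A1 × (∀ j, A j) → ℝ) :
    ∑ a, jointD D1 S σ a * f a = ∑ a1, ∑ s, ∑ b, sigWeight D1 S σ a1 s b * f (a1, b) := by
  rw [Fintype.sum_prod_type]
  refine sum_congr rfl fun a1 _ => ?_
  simp only [jointD, sum_mul]
  exact sum_comm

lemma sum_filter_jointD_mul (p : (∀ j, A j) → Prop) [DecidablePred p]
    (f : A1 × (∀ j, A j) → ℝ) :
    ∑ a ∈ univ.filter (fun a : A1 × (∀ j, A j) => p a.2), jointD D1 S σ a * f a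
      = ∑ a1, ∑ s, ∑ b ∈ univ.filter p, sigWeight D1 S σ a1 s b * f (a1, b) := by
  simp only [sum_filter, ← mul_ite_zero, sum_jointD_mul]

lemma jointD_nonneg (hD1 : ∀ a1, 0 ≤ D1 a1) (hS : ∀ a1 s, 0 ≤ S a1 s)
    (hσ : ∀ i k t, 0 ≤ σ i k t) (a : A1 × (∀ j, A j)) : 0 ≤ jointD D1 S σ a :=
  sum_nonneg fun s _ => sigWeight_nonneg hD1 hS hσ a.1 s a.2

lemma isDist_jointD (hD1 : IsDist D1) (hS : ∀ a1, IsDist (S a1))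
    (hσ : ∀ i k, IsDist (σ i k)) :
    IsDist (jointD D1 S σ) := by
  refine ⟨jointD_nonneg hD1.1 (fun a1 => (hS a1).1) (fun i k => (hσ i k).1), ?_⟩
  have hprod : ∀ s : F → M, ∑ b : ∀ j, A j, ∏ j, σ j (s j) (b j) = 1 := fun s => by
    rw [← Fintype.piFinset_univ, ← prod_univ_sum]
    exact prod_eq_one fun j _ => (hσ j (s j)).2
  simpa [sigWeight, ← mul_sum, hprod, (hS _).2, hD1.2] using
    sum_jointD_mul (D1 := D1) (S := S) (σ := σ) (fun _ => 1)

lemma sum_sigWeight_mul_sub_sum (f : A1 → (F → M) → (∀ j, A j) → ℝ)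
    (g : F → A1 → (F → M) → (∀ j, A j) → ℝ) :
    ∑ a1, ∑ s, ∑ b, sigWeight D1 S σ a1 s b * (f a1 s b - ∑ i, g i a1 s b)
      = ∑ a1, ∑ s, ∑ b, sigWeight D1 S σ a1 s b * f a1 s b
        - ∑ i, ∑ a1, ∑ s, ∑ b, sigWeight D1 S σ a1 s b * g i a1 s b := by
  simp only [mul_sub, mul_sum, sum_sub_distrib]
  rw [sum_comm (γ := F)]
  congr! 2 with a1
  rw [sum_comm (γ := F)]
  exact sum_congr rfl fun s _ => sum_comm

variable (P : ∀ _ : F, A1 × (∀ j, A j) → (F → M) → ℝ)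
  (u : ∀ _ : F, A1 × (∀ j, A j) → ℝ)

section Messages

variable [DecidableEq M]

-- The two sides of the inequality in `SigEqm`: follower `i`'s payoff from playing `x` on
-- message `k`, weighted by the probability of `k`.
variable (D1 S σ) in
def msgPayoff (i : F) (k : M) (x : A i) : ℝ :=
  ∑ a1, ∑ s ∈ univ.filter (fun s : F → M => s i = k), ∑ b,
    sigWeight D1 S σ a1 s b * (u i (a1, update b i x) + P i (a1, update b i x) s)

variable {P u} in
lemma msgPayoff_eq_zero {i : F} {k : M}
    (h : ∑ a1, ∑ s ∈ univ.filter (fun s : F → M => s i = k), D1 a1 * S a1 s = 0)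
    (hD1 : ∀ a1, 0 ≤ D1 a1) (hS : ∀ a1 s, 0 ≤ S a1 s) (x : A i) :
    msgPayoff D1 S σ P u i k x = 0 := by
  refine sum_eq_zero fun a1 _ => sum_eq_zero fun s hs => sum_eq_zero fun b _ => ?_
  have h₁ := (sum_eq_zero_iff_of_nonneg fun a1 _ => sum_nonneg fun s _ =>
    mul_nonneg (hD1 a1) (hS a1 s)).1 h a1 (mem_univ _)
  rw [sigWeight, (sum_eq_zero_iff_of_nonneg fun s _ => mul_nonneg (hD1 a1) (hS a1 s)).1 h₁ s hs]
  ring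

end Messages

variable {P u} [∀ i, DecidableEq (A i)]

lemma margF_jointD (i : F) (t : A i) :
    margF (jointD D1 S σ) i t
      = ∑ a1, ∑ s, ∑ b ∈ univ.filter (fun b : ∀ j, A j => b i = t),
          sigWeight D1 S σ a1 s b := by
  simpa [margF] using sum_filter_jointD_mul (D1 := D1) (S := S) (σ := σ)
    (fun b : ∀ j, A j => b i = t) (fun _ => 1)

variable (D1 S σ P) in
/-- Follower `i`'s expected payment conditional on the recommendation `t`; it is `0 / 0 = 0`
off the support of that recommendation. -/
def recPayment (i : F) (t : A i) : ℝ :=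
  (∑ a1, ∑ s, ∑ b ∈ univ.filter (fun b : ∀ j, A j => b i = t),
      sigWeight D1 S σ a1 s b * P i (a1, b) s) / margF (jointD D1 S σ) i t

lemma margF_mul_recPayment (hD1 : ∀ a1, 0 ≤ D1 a1) (hS : ∀ a1 s, 0 ≤ S a1 s)
    (hσ : ∀ i k t, 0 ≤ σ i k t) (i : F) (t : A i) :
    margF (jointD D1 S σ) i t * recPayment D1 S σ P i t
      = ∑ a1, ∑ s, ∑ b ∈ univ.filter (fun b : ∀ j, A j => b i = t),
          sigWeight D1 S σ a1 s b * P i (a1, b) s := by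
  by_cases h : margF (jointD D1 S σ) i t = 0
  · rw [h, zero_mul, eq_comm]
    rw [margF_jointD] at h
    have hW := sigWeight_nonneg hD1 hS hσ
    refine sum_eq_zero fun a1 _ => sum_eq_zero fun s _ => sum_eq_zero fun b hb => ?_
    have h₁ := (sum_eq_zero_iff_of_nonneg fun a1 _ => sum_nonneg fun s _ =>
      sum_nonneg fun b _ => hW a1 s b).1 h a1 (mem_univ _)
    have h₂ := (sum_eq_zero_iff_of_nonneg fun s _ => sum_nonneg fun b _ => hW a1 s b).1 h₁ s
      (mem_univ _)
    rw [(sum_eq_zero_iff_of_nonneg fun b _ => hW a1 s b).1 h₂ b hb, zero_mul]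
  · exact mul_div_cancel₀ _ h

lemma recPayment_nonneg (hD1 : ∀ a1, 0 ≤ D1 a1) (hS : ∀ a1 s, 0 ≤ S a1 s)
    (hσ : ∀ i k t, 0 ≤ σ i k t) (hP : ∀ i a s, 0 ≤ P i a s) (i : F) (t : A i) :
    0 ≤ recPayment D1 S σ P i t :=
  div_nonneg
    (sum_nonneg fun _ _ => sum_nonneg fun _ _ => sum_nonneg fun _ _ =>
      mul_nonneg (sigWeight_nonneg hD1 hS hσ _ _ _) (hP _ _ _))
    (sum_nonneg fun a _ => jointD_nonneg hD1 hS hσ a)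

lemma sum_jointD_mul_recPayment (hD1 : ∀ a1, 0 ≤ D1 a1) (hS : ∀ a1 s, 0 ≤ S a1 s)
    (hσ : ∀ i k t, 0 ≤ σ i k t) (i : F) :
    ∑ a, jointD D1 S σ a * recPayment D1 S σ P i (a.2 i)
      = ∑ a1, ∑ s, ∑ b, sigWeight D1 S σ a1 s b * P i (a1, b) s := by
  have fiber : ∀ t : A i, ∑ a ∈ univ.filter (fun a : A1 × (∀ j, A j) => a.2 i = t),
      jointD D1 S σ a * recPayment D1 S σ P i (a.2 i)
        = margF (jointD D1 S σ) i t * recPayment D1 S σ P i t := fun t => by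
    rw [margF, sum_mul]
    exact sum_congr rfl fun a ha => by rw [(mem_filter.1 ha).2]
  rw [← sum_fiberwise univ (fun a : A1 × (∀ j, A j) => a.2 i)]
  simp only [fiber, margF_mul_recPayment hD1 hS hσ]
  rw [sum_comm]
  refine sum_congr rfl fun a1 _ => ?_
  rw [sum_comm]
  exact sum_congr rfl fun s _ => sum_fiberwise _ _ _

variable [DecidableEq M]

lemma SigEqm.mul_msgPayoff_le (heq : SigEqm u P D1 S σ) (hD1 : ∀ a1, 0 ≤ D1 a1)
    (hS : ∀ a1 s, 0 ≤ S a1 s) (hσ : ∀ i k t, 0 ≤ σ i k t) (i : F) (k : M) (t t' : A i) :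
    σ i k t * msgPayoff D1 S σ P u i k t' ≤ σ i k t * msgPayoff D1 S σ P u i k t := by
  rcases (hσ i k t).eq_or_lt with ht | ht
  · simp [← ht]
  by_cases hk : 0 < ∑ a1, ∑ s ∈ univ.filter (fun s : F → M => s i = k), D1 a1 * S a1 s
  · exact mul_le_mul_of_nonneg_left (heq i k hk t ht t') ht.le
  · have hk0 := le_antisymm (not_lt.1 hk)
      (sum_nonneg fun a1 _ => sum_nonneg fun s _ => mul_nonneg (hD1 a1) (hS a1 s))
    rw [msgPayoff_eq_zero hk0 hD1 hS, msgPayoff_eq_zero hk0 hD1 hS]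

lemma sum_filter_sigWeight_mul_of_update_invariant (hσ : ∀ i k, ∑ t, σ i k t = 1) (i : F)
    (g : A1 → (F → M) → (∀ j, A j) → ℝ)
    (hg : ∀ a1 s b x, g a1 s (update b i x) = g a1 s b)
    (t : A i) :
    ∑ a1, ∑ s, ∑ b ∈ univ.filter (fun b : ∀ j, A j => b i = t),
        sigWeight D1 S σ a1 s b * g a1 s b
      = ∑ k, σ i k t * ∑ a1, ∑ s ∈ univ.filter (fun s : F → M => s i = k), ∑ b,
          sigWeight D1 S σ a1 s b * g a1 s b := by
  have cond : ∀ a1 s, ∑ b ∈ univ.filter (fun b : ∀ j, A j => b i = t),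
      sigWeight D1 S σ a1 s b * g a1 s b
        = σ i (s i) t * ∑ b, sigWeight D1 S σ a1 s b * g a1 s b := fun a1 s => by
    simp only [sigWeight, mul_assoc, ← mul_sum]
    rw [sum_filter_prod_mul_of_update_invariant i (fun j => σ j (s j)) (hσ i (s i)) _
      (hg a1 s) t]
    ring
  calc _ = ∑ a1, ∑ k, ∑ s ∈ univ.filter (fun s : F → M => s i = k),
          σ i k t * ∑ b, sigWeight D1 S σ a1 s b * g a1 s b := by
        refine sum_congr rfl fun a1 _ => ?_
        rw [← sum_fiberwise univ (fun s : F → M => s i)]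
        exact sum_congr rfl fun k _ => sum_congr rfl fun s hs => by
          rw [cond, (mem_filter.1 hs).2]
    _ = _ := by rw [sum_comm]; simp only [mul_sum]

lemma sum_filter_jointD_mul_update_le (heq : SigEqm u P D1 S σ) (hD1 : ∀ a1, 0 ≤ D1 a1)
    (hS : ∀ a1 s, 0 ≤ S a1 s) (hσ : ∀ i k, IsDist (σ i k)) (hP : ∀ i a s, 0 ≤ P i a s)
    (i : F) (t t' : A i) :
    ∑ a ∈ univ.filter (fun a : A1 × (∀ j, A j) => a.2 i = t),
        jointD D1 S σ a * u i (a.1, update a.2 i t')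
      ≤ ∑ a ∈ univ.filter (fun a : A1 × (∀ j, A j) => a.2 i = t), jointD D1 S σ a * u i a
        + margF (jointD D1 S σ) i t * recPayment D1 S σ P i t := by
  have hσ0 : ∀ i k t, 0 ≤ σ i k t := fun i k => (hσ i k).1
  have hσ1 : ∀ i k, ∑ t, σ i k t = 1 := fun i k => (hσ i k).2
  have payoff : ∀ x, ∑ a1, ∑ s, ∑ b ∈ univ.filter (fun b : ∀ j, A j => b i = t),
      sigWeight D1 S σ a1 s b * (u i (a1, update b i x) + P i (a1, update b i x) s)
        = ∑ k, σ i k t * msgPayoff D1 S σ P u i k x := fun x =>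
    sum_filter_sigWeight_mul_of_update_invariant hσ1 i _ (fun a1 s b y => by simp) t
  calc _ = ∑ a1, ∑ s, ∑ b ∈ univ.filter (fun b : ∀ j, A j => b i = t),
          sigWeight D1 S σ a1 s b * u i (a1, update b i t') :=
        sum_filter_jointD_mul (fun b : ∀ j, A j => b i = t) fun a => u i (a.1, update a.2 i t')
    _ ≤ ∑ a1, ∑ s, ∑ b ∈ univ.filter (fun b : ∀ j, A j => b i = t),
          sigWeight D1 S σ a1 s b * (u i (a1, update b i t') + P i (a1, update b i t') s) := by
        gcongr with a1 _ s _ b _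
        · exact sigWeight_nonneg hD1 hS hσ0 a1 s b
        · exact le_add_of_nonneg_right (hP _ _ _)
    _ = ∑ k, σ i k t * msgPayoff D1 S σ P u i k t' := payoff t'
    _ ≤ ∑ k, σ i k t * msgPayoff D1 S σ P u i k t :=
        sum_le_sum fun k _ => heq.mul_msgPayoff_le hD1 hS hσ0 i k t t'
    _ = ∑ a1, ∑ s, ∑ b ∈ univ.filter (fun b : ∀ j, A j => b i = t),
          sigWeight D1 S σ a1 s b * (u i (a1, b) + P i (a1, b) s) := by
        rw [← payoff]
        exact sum_congr rfl fun a1 _ => sum_congr rfl fun s _ => sum_congr rfl fun b hb => by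
          rw [← (mem_filter.1 hb).2, update_eq_self]
    _ = _ := by
        rw [sum_filter_jointD_mul (fun b : ∀ j, A j => b i = t) (u i),
          margF_mul_recPayment hD1 hS hσ0]
        simp only [mul_add, sum_add_distrib]

end Signaling

theorem stmt18_general {A1 : Type*} {F : Type*} {A : F → Type*} {M : Type*}
    [Fintype A1] [Fintype F] [DecidableEq F]
    [∀ i, Fintype (A i)] [∀ i, DecidableEq (A i)]
    [Fintype M] [DecidableEq M]
    (u1 : A1 × (∀ j, A j) → ℝ) (u : ∀ _ : F, A1 × (∀ j, A j) → ℝ)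
    (D1 : A1 → ℝ) (hD1 : IsDist D1)
    (S : A1 → (F → M) → ℝ) (hS : ∀ a1, IsDist (S a1))
    (P : ∀ _ : F, A1 × (∀ j, A j) → (F → M) → ℝ) (hP : ∀ i a s, 0 ≤ P i a s)
    (σ : ∀ i : F, M → A i → ℝ) (hσ : ∀ i k, IsDist (σ i k))
    (heq : SigEqm u P D1 S σ) :
    ∃ (D : A1 × (∀ j, A j) → ℝ) (Pb : ∀ i : F, A i → ℝ),
      IsDist D ∧ (∀ i ai, 0 ≤ Pb i ai) ∧
      -- (i) `D` is the joint outcome distribution of the signaling commitment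
      (∀ a : A1 × (∀ j, A j), D a = jointD D1 S σ a) ∧
      -- the correlated commitment `(D, Pb)` is incentive compatible
      ICF u D Pb ∧
      -- (ii) expected payments to each follower agree
      (∀ i : F,
        (∑ a : A1 × (∀ j, A j), D a * Pb i (a.2 i))
          = ∑ a1 : A1, ∑ s : F → M, ∑ b : ∀ j, A j,
              D1 a1 * S a1 s * (∏ j, σ j (s j) (b j)) * P i (a1, b) s) ∧
      -- in particular, the leader's expected utility after payments is the same
      ((∑ a : A1 × (∀ j, A j), D a * (u1 a - ∑ i : F, Pb i (a.2 i)))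
        = ∑ a1 : A1, ∑ s : F → M, ∑ b : ∀ j, A j,
            D1 a1 * S a1 s * (∏ j, σ j (s j) (b j)) *
              (u1 (a1, b) - ∑ i : F, P i (a1, b) s)) := by
  have hS0 : ∀ a1 s, 0 ≤ S a1 s := fun a1 => (hS a1).1
  have hσ0 : ∀ i k t, 0 ≤ σ i k t := fun i k => (hσ i k).1
  have payments := sum_jointD_mul_recPayment (P := P) hD1.1 hS0 hσ0
  refine ⟨jointD D1 S σ, recPayment D1 S σ P, isDist_jointD hD1 hS hσ,
    recPayment_nonneg hD1.1 hS0 hσ0 hP, fun _ => rfl,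
    ICF_of_sum_filter_le fun i t _ t' =>
      sum_filter_jointD_mul_update_le heq hD1.1 hS0 hσ hP i t t',
    payments, ?_⟩
  rw [sum_jointD_mul]
  refine (sum_sigWeight_mul_sub_sum (fun a1 _ b => u1 (a1, b))
    (fun i _ _ b => recPayment D1 S σ P i (b i))).trans ?_
  refine Eq.trans ?_ (sum_sigWeight_mul_sub_sum (fun a1 _ b => u1 (a1, b))
    (fun i a1 s b => P i (a1, b) s)).symm
  simp only [← payments, sum_jointD_mul]

theorem stmt18 {A1 : Type*} {F : Type*} {A : F → Type*} {M : Type*}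
    [Fintype A1] [Nonempty A1] [Fintype F] [DecidableEq F]
    [∀ i, Fintype (A i)] [∀ i, DecidableEq (A i)] [∀ i, Nonempty (A i)]
    [Fintype M] [DecidableEq M] [Nonempty M]
    (u1 : A1 × (∀ j, A j) → ℝ) (u : ∀ _ : F, A1 × (∀ j, A j) → ℝ)
    (D1 : A1 → ℝ) (hD1 : IsDist D1)
    (S : A1 → (F → M) → ℝ) (hS : ∀ a1, IsDist (S a1))
    (P : ∀ _ : F, A1 × (∀ j, A j) → (F → M) → ℝ) (hP : ∀ i a s, 0 ≤ P i a s)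
    (σ : ∀ i : F, M → A i → ℝ) (hσ : ∀ i k, IsDist (σ i k))
    (heq : SigEqm u P D1 S σ) :
    ∃ (D : A1 × (∀ j, A j) → ℝ) (Pb : ∀ i : F, A i → ℝ),
      IsDist D ∧ (∀ i ai, 0 ≤ Pb i ai) ∧
      -- (i) `D` is the joint outcome distribution of the signaling commitment
      (∀ a : A1 × (∀ j, A j), D a = jointD D1 S σ a) ∧
      -- the correlated commitment `(D, Pb)` is incentive compatible
      ICF u D Pb ∧
      -- (ii) expected payments to each follower agree
      (∀ i : F,
        (∑ a : A1 × (∀ j, A j), D a * Pb i (a.2 i))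
          = ∑ a1 : A1, ∑ s : F → M, ∑ b : ∀ j, A j,
              D1 a1 * S a1 s * (∏ j, σ j (s j) (b j)) * P i (a1, b) s) ∧
      -- in particular, the leader's expected utility after payments is the same
      ((∑ a : A1 × (∀ j, A j), D a * (u1 a - ∑ i : F, Pb i (a.2 i)))
        = ∑ a1 : A1, ∑ s : F → M, ∑ b : ∀ j, A j,
            D1 a1 * S a1 s * (∏ j, σ j (s j) (b j)) *
              (u1 (a1, b) - ∑ i : F, P i (a1, b) s)) :=
  stmt18_general u1 u D1 hD1 S hS P hP σ hσ heq
end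
end
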